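/- arXiv:2011.14813 — 5 statements merged into one kernel-verified Lean document; each statement's English description precedes it below -/
import Mathlib

section
/- Let m > 1, a ∈ (0, +∞], and let φ : ℝ → ℝ be continuous with φ(ξ) = 0 for all ξ ≤ 0, φ differentiable on (0, a) with φ'(ξ) > 0 for all ξ ∈ (0, a). For s ∈ φ((0, a)) define ψ̃(s) = m·s^{m−1}·φ'(φ⁻¹(s)), where φ⁻¹ is the inverse of φ restricted to (0, a). Let c > 0 and r > 0. Then for every ξ ∈ (0, a), the delayed value admits the functional representation φ(ξ − c·r) = inf { θ ∈ [0, φ(ξ)] : ∫_θ^{φ(ξ)} m·s^{m−1}/ψ̃(s) ds ≤ c·r }. In particular, if ∫_0^{φ(ξ)} m·s^{m−1}/ψ̃(s) ds ≤ c·r then φ(ξ − c·r) = 0, and otherwise φ(ξ − c·r) is the unique θ > 0 with ∫_θ^{φ(ξ)} m·s^{m−1}/ψ̃(s) ds = c·r. -/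
open Real Filter Set MeasureTheory

/-- functional representation of the delayed value `φ(ξ - cr)`
through the phase function `ψ̃` (well-definedness of the phase transform). -/
theorem phase_transform_delayed_value (m : ℝ) (hm : 1 < m)
    (a : EReal) (ha : 0 < a) (φ : ℝ → ℝ) (hcont : Continuous φ)
    (hzero : ∀ ξ : ℝ, ξ ≤ 0 → φ ξ = 0)
    (hdiff : ∀ ξ : ℝ, 0 < ξ → (ξ : EReal) < a → DifferentiableAt ℝ φ ξ)
    (hpos : ∀ ξ : ℝ, 0 < ξ → (ξ : EReal) < a → 0 < deriv φ ξ)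
    (ψ : ℝ → ℝ)
    (hψ : ∀ ξ : ℝ, 0 < ξ → (ξ : EReal) < a →
      ψ (φ ξ) = m * (φ ξ) ^ (m - 1) * deriv φ ξ)
    (c r : ℝ) (hc : 0 < c) (hr : 0 < r) :
    ∀ ξ : ℝ, 0 < ξ → (ξ : EReal) < a →
      (φ (ξ - c * r) =
        sInf {θ : ℝ | θ ∈ Set.Icc 0 (φ ξ) ∧
          (∫ s in Set.Ioo θ (φ ξ), m * s ^ (m - 1) / ψ s) ≤ c * r}) ∧
      ((∫ s in Set.Ioo 0 (φ ξ), m * s ^ (m - 1) / ψ s) ≤ c * r → φ (ξ - c * r) = 0) ∧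
      (c * r < (∫ s in Set.Ioo 0 (φ ξ), m * s ^ (m - 1) / ψ s) →
        0 < φ (ξ - c * r) ∧
        (∫ s in Set.Ioo (φ (ξ - c * r)) (φ ξ), m * s ^ (m - 1) / ψ s) = c * r ∧
        ∀ θ : ℝ, 0 < θ →
          (∫ s in Set.Ioo θ (φ ξ), m * s ^ (m - 1) / ψ s) = c * r →
          θ = φ (ξ - c * r)) := by
  intro ξ hξ0 hξa
  have hd0 : 0 < c * r := mul_pos hc hr
  have hφ0 : φ 0 = 0 := hzero 0 le_rfl
  have hlt_a : ∀ x : ℝ, x < ξ → (x : EReal) < a := fun x hx =>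
    lt_trans (by exact_mod_cast hx) hξa
  have hmono : StrictMonoOn φ (Set.Icc 0 ξ) := by
    apply strictMonoOn_of_deriv_pos (convex_Icc 0 ξ) hcont.continuousOn
    intro x hx
    rw [interior_Icc] at hx
    exact hpos x hx.1 (hlt_a x hx.2)
  have hφξ : 0 < φ ξ := by
    have := hmono (Set.left_mem_Icc.2 hξ0.le) (Set.right_mem_Icc.2 hξ0.le) hξ0
    rwa [hφ0] at this
  -- key integral identity
  have key : ∀ η : ℝ, 0 ≤ η → η ≤ ξ →
      (∫ s in Set.Ioo (φ η) (φ ξ), m * s ^ (m - 1) / ψ s) = ξ - η := by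
    intro η hη0 hηξ
    have hsub : Set.Ioo η ξ ⊆ Set.Icc 0 ξ := fun x hx => ⟨hη0.trans hx.1.le, hx.2.le⟩
    have himg : φ '' Set.Ioo η ξ = Set.Ioo (φ η) (φ ξ) := by
      apply Set.Subset.antisymm
      · rintro y ⟨x, hx, rfl⟩
        exact ⟨hmono ⟨hη0, hηξ⟩ (hsub hx) hx.1, hmono (hsub hx) ⟨hξ0.le, le_rfl⟩ hx.2⟩
      · exact intermediate_value_Ioo hηξ hcont.continuousOn
    rw [← himg,
      MeasureTheory.integral_image_eq_integral_abs_deriv_smul measurableSet_Ioo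
        (fun x hx => ((hdiff x (lt_of_le_of_lt hη0 hx.1) (hlt_a x hx.2)).hasDerivAt).hasDerivWithinAt)
        (hmono.injOn.mono hsub)]
    have hcongr : ∀ x ∈ Set.Ioo η ξ,
        |deriv φ x| • (m * φ x ^ (m - 1) / ψ (φ x)) = 1 := by
      intro x hx
      have hx0 : 0 < x := lt_of_le_of_lt hη0 hx.1
      have hxa := hlt_a x hx.2
      have hdx := hpos x hx0 hxa
      have hφx : 0 < φ x := by
        have := hmono (Set.left_mem_Icc.2 hξ0.le) (hsub hx) hx0
        rwa [hφ0] at this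
      have hne : (0:ℝ) < m * φ x ^ (m - 1) :=
        mul_pos (lt_trans one_pos hm) (Real.rpow_pos_of_pos hφx _)
      rw [hψ x hx0 hxa, smul_eq_mul, abs_of_pos hdx]
      field_simp
    rw [MeasureTheory.setIntegral_congr_fun measurableSet_Ioo hcongr]
    simp [Real.volume_Ioo, ENNReal.toReal_ofReal (sub_nonneg.2 hηξ), hηξ]
  have key0 : (∫ s in Set.Ioo 0 (φ ξ), m * s ^ (m - 1) / ψ s) = ξ := by
    have := key 0 le_rfl hξ0.le
    rw [hφ0] at this
    simpa using this
  -- surjectivity onto [0, φ ξ]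
  have hsurj : ∀ θ : ℝ, 0 ≤ θ → θ ≤ φ ξ → ∃ η : ℝ, 0 ≤ η ∧ η ≤ ξ ∧ φ η = θ := by
    intro θ hθ0 hθξ
    have : θ ∈ Set.Icc (φ 0) (φ ξ) := by rw [hφ0]; exact ⟨hθ0, hθξ⟩
    obtain ⟨η, hη, hφη⟩ := intermediate_value_Icc hξ0.le hcont.continuousOn this
    exact ⟨η, hη.1, hη.2, hφη⟩
  -- second bullet
  have bullet2 : (∫ s in Set.Ioo 0 (φ ξ), m * s ^ (m - 1) / ψ s) ≤ c * r →
      φ (ξ - c * r) = 0 := by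
    intro h
    rw [key0] at h
    exact hzero _ (by linarith)
  -- third bullet
  have bullet3 : c * r < (∫ s in Set.Ioo 0 (φ ξ), m * s ^ (m - 1) / ψ s) →
      0 < φ (ξ - c * r) ∧
      (∫ s in Set.Ioo (φ (ξ - c * r)) (φ ξ), m * s ^ (m - 1) / ψ s) = c * r ∧
      ∀ θ : ℝ, 0 < θ →
        (∫ s in Set.Ioo θ (φ ξ), m * s ^ (m - 1) / ψ s) = c * r →
        θ = φ (ξ - c * r) := by
    intro h
    rw [key0] at h
    have hmem : ξ - c * r ∈ Set.Icc (0:ℝ) ξ := ⟨by linarith, by linarith⟩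
    have hφpos : 0 < φ (ξ - c * r) := by
      have := hmono (Set.left_mem_Icc.2 hξ0.le) hmem (by linarith)
      rwa [hφ0] at this
    have heq : (∫ s in Set.Ioo (φ (ξ - c * r)) (φ ξ), m * s ^ (m - 1) / ψ s) = c * r := by
      rw [key _ hmem.1 hmem.2]; ring
    refine ⟨hφpos, heq, ?_⟩
    intro θ hθ0 hθ
    by_cases hθξ : θ ≤ φ ξ
    · obtain ⟨η, hη0, hηξ, rfl⟩ := hsurj θ hθ0.le hθξ
      rw [key η hη0 hηξ] at hθ
      have : η = ξ - c * r := by linarith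
      rw [this]
    · exfalso
      have : Set.Ioo θ (φ ξ) = ∅ := Set.Ioo_eq_empty (by intro h'; exact hθξ h'.le)
      rw [this] at hθ
      simp at hθ
      rcases hθ with h' | h' <;> linarith
  refine ⟨?_, bullet2, bullet3⟩
  -- first bullet
  by_cases hcase : ξ ≤ c * r
  · -- φ (ξ - c r) = 0 and 0 is in the set
    have hφ0' : φ (ξ - c * r) = 0 := hzero _ (by linarith)
    rw [hφ0']
    have h0mem : (0:ℝ) ∈ {θ : ℝ | θ ∈ Set.Icc 0 (φ ξ) ∧
        (∫ s in Set.Ioo θ (φ ξ), m * s ^ (m - 1) / ψ s) ≤ c * r} := by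
      refine ⟨⟨le_rfl, hφξ.le⟩, ?_⟩
      rw [key0]; exact hcase
    symm
    apply le_antisymm
    · exact csInf_le ⟨0, fun x hx => hx.1.1⟩ h0mem
    · exact le_csInf ⟨0, h0mem⟩ (fun x hx => hx.1.1)
  · push_neg at hcase
    obtain ⟨hφpos, heq, huniq⟩ := bullet3 (by rwa [key0])
    have hmem : ξ - c * r ∈ Set.Icc (0:ℝ) ξ := ⟨by linarith, by linarith⟩
    have hφle : φ (ξ - c * r) ≤ φ ξ :=
      (hmono.monotoneOn) hmem (Set.right_mem_Icc.2 hξ0.le) (by linarith)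
    have hstar_mem : φ (ξ - c * r) ∈ {θ : ℝ | θ ∈ Set.Icc 0 (φ ξ) ∧
        (∫ s in Set.Ioo θ (φ ξ), m * s ^ (m - 1) / ψ s) ≤ c * r} :=
      ⟨⟨hφpos.le, hφle⟩, le_of_eq heq⟩
    symm
    apply le_antisymm
    · exact csInf_le ⟨0, fun x hx => hx.1.1⟩ hstar_mem
    · apply le_csInf ⟨_, hstar_mem⟩
      rintro θ ⟨⟨hθ0, hθξ⟩, hθint⟩
      obtain ⟨η, hη0, hηξ, rfl⟩ := hsurj θ hθ0 hθξ
      rw [key η hη0 hηξ] at hθint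
      exact (hmono.monotoneOn) hmem ⟨hη0, hηξ⟩ (by linarith)
end

section
/- Assume (H), let k ≥ κ and c₁ > c₂ > 0. For i = 1, 2, let φᵢ be a sharp local wave profile with speed cᵢ and ceiling k on (−∞, ξ₀ⁱ), satisfying the edge asymptotics φᵢ(ξ)·ξ^{−1/(m−1)} → ((m−1)cᵢ/m)^{1/(m−1)} as ξ → 0⁺, with maximal existence interval, and let (0, ξ̂ᵢ) ⊆ (0, ξ₀ⁱ) be the maximal interval on which φᵢ is strictly increasing. Then for all ξ₁ ∈ (0, ξ̂₁) and ξ₂ ∈ (0, ξ̂₂) with φ₁(ξ₁) = φ₂(ξ₂), one has φ₁'(ξ₁) > φ₂'(ξ₂) (equivalently, the phase functions satisfy ψ̃_{c₁}(v) > ψ̃_{c₂}(v) at every common value v of the two profiles in their increasing ranges). -/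
open Real Filter Set MeasureTheory

/-- Standing hypotheses (H): degenerate Fisher-KPP data. -/
structure FisherData where
  m : ℝ
  r : ℝ
  d : ℝ → ℝ
  b : ℝ → ℝ
  κ : ℝ
  hm : 1 < m
  hr : 0 ≤ r
  hd_smooth : ContDiffOn ℝ 2 d (Set.Ici 0)
  hb_smooth : ContDiffOn ℝ 2 b (Set.Ici 0)
  hd0 : d 0 = 0
  hb0 : b 0 = 0
  hκ : 0 < κ
  heq : d κ = b κ
  hsign : ∀ s : ℝ, 0 < s → s ≠ κ → (b s - d s) * (s - κ) < 0
  hbd0 : derivWithin d (Set.Ici 0) 0 < derivWithin b (Set.Ici 0) 0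
  hd0' : 0 ≤ derivWithin d (Set.Ici 0) 0
  hd' : ∀ s : ℝ, 0 ≤ s → 0 ≤ derivWithin d (Set.Ici 0) s
  hb' : ∀ s : ℝ, 0 ≤ s → 0 ≤ derivWithin b (Set.Ici 0) s

/-- The function `φ^m` (real power). -/
noncomputable def phiPow (m : ℝ) (φ : ℝ → ℝ) : ℝ → ℝ := fun ξ => φ ξ ^ m

/-- A sharp local wave profile with speed `c` and ceiling `k` on `(-∞, ξ₀)`
(`ξ₀ ∈ (0, +∞]` as an extended real). -/
def IsSharpLocalProfile (D : FisherData) (c k : ℝ) (ξ₀ : EReal) (φ : ℝ → ℝ) : Prop :=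
  0 < ξ₀ ∧ Continuous φ ∧
  (∀ ξ : ℝ, ξ ≤ 0 → φ ξ = 0) ∧
  (∀ ξ : ℝ, 0 < ξ → (ξ : EReal) < ξ₀ → φ ξ ∈ Set.Ioo 0 k) ∧
  (∀ ξ : ℝ, 0 < ξ → (ξ : EReal) < ξ₀ → DifferentiableAt ℝ φ ξ) ∧
  (∀ ξ : ℝ, 0 < ξ → (ξ : EReal) < ξ₀ → DifferentiableAt ℝ (phiPow D.m φ) ξ) ∧
  (∀ ξ : ℝ, 0 < ξ → (ξ : EReal) < ξ₀ → DifferentiableAt ℝ (deriv (phiPow D.m φ)) ξ) ∧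
  Filter.Tendsto (deriv (phiPow D.m φ)) (nhdsWithin 0 (Set.Ioi 0)) (nhds 0) ∧
  (∀ ξ : ℝ, 0 < ξ → (ξ : EReal) < ξ₀ →
    c * deriv φ ξ = deriv (deriv (phiPow D.m φ)) ξ - D.d (φ ξ) + D.b (φ (ξ - c * D.r)))

/-- Edge asymptotics `φ(ξ)·ξ^{-1/(m-1)} → ((m-1)c/m)^{1/(m-1)}` as `ξ → 0⁺`. -/
def EdgeAsymp (m c : ℝ) (φ : ℝ → ℝ) : Prop :=
  Filter.Tendsto (fun ξ : ℝ => φ ξ * ξ ^ (-(1 / (m - 1))))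
    (nhdsWithin 0 (Set.Ioi 0)) (nhds (((m - 1) * c / m) ^ (1 / (m - 1))))

/-- The filter of real numbers tending to `ξ₀ ∈ (0, +∞]` from the left
(equal to `atTop` when `ξ₀ = ⊤`). -/
noncomputable def edgeFilter (ξ₀ : EReal) : Filter ℝ :=
  Filter.comap (fun x : ℝ => (x : EReal)) (nhdsWithin ξ₀ (Set.Iio ξ₀))

/-!
Work in the value variable `v = φ ξ` on the common increasing range, where the phase function is
`ψ̃ = m v^{m-1} φ'(φ⁻¹ v)`; at equal values, comparing `ψ̃` is comparing `φ'`. By the wave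
equation `(φ^m)' - cφ` vanishes at the edge and has derivative `d(φ) - b(φ(· - cr)) = O(φ)`, so
`ψ̃(v) ~ c v` as `v → 0⁺` and `ψ̃₁ > ψ̃₂` near `0`. Along a profile
`dψ̃/dv = (φ^m)''/φ' = c + (d(v) - b(φ(φ⁻¹ v - cr)))/φ'`. At a first contact point of `ψ̃₁` and
`ψ̃₂` the slopes `φᵢ'` agree, and before it `φ₂⁻¹ - φ₁⁻¹` was nondecreasing, which puts the
delayed value `φ₁(φ₁⁻¹ v - c₁r)` below `φ₂(φ₂⁻¹ v - c₂r)`; as `b` is nondecreasing,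
`(ψ̃₁ - ψ̃₂)' ≥ c₁ - c₂ > 0` there, which is impossible for a contact from above.
-/

open Topology Function

section RealAnalysis

theorem HasDerivAt.nonneg_of_eventually_le_left {f : ℝ → ℝ} {f' x : ℝ} (hf : HasDerivAt f f' x)
    (h : ∀ᶠ y in 𝓝[<] x, f y ≤ f x) : 0 ≤ f' := by
  refine ge_of_tendsto (hasDerivAt_iff_tendsto_slope_left_right.1 hf).1 ?_
  filter_upwards [self_mem_nhdsWithin, h] with y (hy : y < x) hfy
  rw [slope_def_field]
  exact div_nonneg_of_nonpos (by linarith) (by linarith)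

theorem HasDerivAt.nonpos_of_eventually_ge_left {f : ℝ → ℝ} {f' x : ℝ} (hf : HasDerivAt f f' x)
    (h : ∀ᶠ y in 𝓝[<] x, f x ≤ f y) : f' ≤ 0 := by
  simpa using hf.neg.nonneg_of_eventually_le_left (h.mono fun y hy => neg_le_neg hy)

theorem abs_sub_le_mul_of_hasDerivAt_of_tendsto {f f' : ℝ → ℝ} {a b A y : ℝ} (hab : a < b)
    (hf : ∀ x ∈ Ioc a b, HasDerivAt f (f' x) x) (hf' : ∀ x ∈ Ioc a b, |f' x| ≤ A)
    (hlim : Tendsto f (𝓝[>] a) (𝓝 y)) : |f b - y| ≤ A * (b - a) := by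
  have hmvt : ∀ x ∈ Ioo a b, |f b - f x| ≤ A * (b - x) := fun x hx =>
    norm_image_sub_le_of_norm_deriv_le_segment'
      (fun t ht => (hf t ⟨hx.1.trans_le ht.1, ht.2⟩).hasDerivWithinAt)
      (fun t ht => hf' t ⟨hx.1.trans_le ht.1, ht.2.le⟩) b ⟨hx.2.le, le_rfl⟩
  have hlim' : Tendsto (fun x => |f b - f x| - A * (b - x)) (𝓝[>] a)
      (𝓝 (|f b - y| - A * (b - a))) :=
    ((tendsto_const_nhds.sub hlim).abs).sub
      ((tendsto_const_nhds.sub (tendsto_id.mono_left nhdsWithin_le_nhds)).const_mul A)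
  have := le_of_tendsto hlim' <| show ∀ᶠ x in 𝓝[>] a, |f b - f x| - A * (b - x) ≤ 0 by
    filter_upwards [Ioo_mem_nhdsGT hab] with x hx
    linarith [hmvt x hx]
  linarith

theorem nonpos_of_hasDerivWithinAt_le_mul {z z' : ℝ → ℝ} {K a b : ℝ}
    (hz : ContinuousOn z (Icc a b)) (hz' : ∀ x ∈ Ico a b, HasDerivWithinAt z (z' x) (Ici x) x)
    (ha : z a ≤ 0) (hbound : ∀ x ∈ Ico a b, z' x ≤ K * z x) : ∀ x ∈ Icc a b, z x ≤ 0 := by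
  intro x hx
  simpa [gronwallBound_ε0_δ0] using le_gronwallBound_of_liminf_deriv_right_le hz
    (fun x hx _ hr => (hz' x hx).liminf_right_slope_le hr) ha
    (K := K) (ε := 0) (fun x hx => by simpa using hbound x hx) x hx

theorem exists_first_zero_of_eventually_pos {f : ℝ → ℝ} {a b : ℝ} (hab : a < b)
    (hf : ContinuousOn f (Ioc a b)) (hpos : ∀ᶠ x in 𝓝[>] a, 0 < f x) (hb : f b ≤ 0) :
    ∃ c ∈ Ioc a b, f c = 0 ∧ ∀ x ∈ Ioo a c, 0 < f x := by
  obtain ⟨a', ha', hpos'⟩ := (nhdsGT_basis_of_exists_gt ⟨b, hab⟩).eventually_iff.1 hpos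
  set p := (a + min a' b) / 2
  have hp : p ∈ Ioo a (min a' b) := ⟨by simp only [p]; linarith [lt_min ha' hab],
    by simp only [p]; linarith [lt_min ha' hab]⟩
  have hpa' : p < a' := hp.2.trans_le (min_le_left _ _)
  have hpb : p < b := hp.2.trans_le (min_le_right _ _)
  have hfp : 0 < f p := hpos' ⟨hp.1, hpa'⟩
  have hfIcc : ContinuousOn f (Icc p b) := hf.mono (Icc_subset_Ioc_iff hpb.le |>.2 ⟨hp.1, le_rfl⟩)
  have hS : IsCompact (Icc p b ∩ f ⁻¹' Iic 0) :=
    isCompact_Icc.of_isClosed_subset (hfIcc.preimage_isClosed_of_isClosed isClosed_Icc isClosed_Iic)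
      inter_subset_left
  obtain ⟨c, ⟨hcI, hfc⟩, hcmin⟩ := hS.exists_isLeast ⟨b, ⟨hpb.le, le_rfl⟩, hb⟩
  have hpc : p < c := hcI.1.lt_of_ne (by rintro rfl; exact absurd hfc (not_le.2 hfp))
  refine ⟨c, ⟨hp.1.trans hpc, hcI.2⟩, ?_, fun x hx => ?_⟩
  · obtain ⟨x, hx, hfx⟩ := intermediate_value_Icc' hpc.le (hfIcc.mono (Icc_subset_Icc_right hcI.2))
      ⟨hfc, hfp.le⟩
    rwa [← hx.2.antisymm (hcmin ⟨⟨hx.1, hx.2.trans hcI.2⟩, hfx.le⟩)]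
  · rcases le_or_gt x p with hxp | hxp
    · exact hpos' ⟨hx.1, hxp.trans_lt hpa'⟩
    · by_contra hfx
      exact absurd (hcmin ⟨⟨hxp.le, hx.2.le.trans hcI.2⟩, not_lt.1 hfx⟩) (not_le.2 hx.2)

theorem monotoneOn_Ici_of_derivWithin_nonneg {f : ℝ → ℝ} {a : ℝ}
    (hf : DifferentiableOn ℝ f (Ici a)) (hf' : ∀ x ∈ Ioi a, 0 ≤ derivWithin f (Ici a) x) :
    MonotoneOn f (Ici a) :=
  monotoneOn_of_hasDerivWithinAt_nonneg (convex_Ici a) hf.continuousOn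
    (fun x hx => by
      rw [interior_Ici] at hx ⊢
      exact ((hf x (mem_Ici_of_Ioi hx)).hasDerivWithinAt).mono Ioi_subset_Ici_self)
    (fun x hx => hf' x (by rwa [interior_Ici] at hx))

end RealAnalysis

section StrictMonoInverse

variable {f : ℝ → ℝ} {a b : ℝ}

theorem StrictMonoOn.apply_mem_Ioo (hmono : StrictMonoOn f (Icc a b)) {x : ℝ} (hx : x ∈ Ioo a b) :
    f x ∈ Ioo (f a) (f b) :=
  ⟨hmono ⟨le_rfl, (hx.1.trans hx.2).le⟩ (Ioo_subset_Icc_self hx) hx.1,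
    hmono (Ioo_subset_Icc_self hx) ⟨(hx.1.trans hx.2).le, le_rfl⟩ hx.2⟩

theorem StrictMonoOn.invFunOn_Ioo_apply (hmono : StrictMonoOn f (Icc a b)) {x : ℝ}
    (hx : x ∈ Ioo a b) : invFunOn f (Ioo a b) (f x) = x :=
  (hmono.injOn.mono Ioo_subset_Icc_self).leftInvOn_invFunOn hx

variable (hab : a ≤ b) (hf : ContinuousOn f (Icc a b)) (hmono : StrictMonoOn f (Icc a b))
include hab hf

theorem invFunOn_mem_Ioo {v : ℝ} (hv : v ∈ Ioo (f a) (f b)) :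
    invFunOn f (Ioo a b) v ∈ Ioo a b :=
  SurjOn.mapsTo_invFunOn (intermediate_value_Ioo hab hf) hv

theorem apply_invFunOn_of_mem_Ioo {v : ℝ} (hv : v ∈ Ioo (f a) (f b)) :
    f (invFunOn f (Ioo a b) v) = v :=
  SurjOn.rightInvOn_invFunOn (intermediate_value_Ioo hab hf) hv

include hmono

theorem strictMonoOn_invFunOn : StrictMonoOn (invFunOn f (Ioo a b)) (Ioo (f a) (f b)) :=
  fun u hu v hv huv => by
    have hXu := invFunOn_mem_Ioo hab hf hu
    have hXv := invFunOn_mem_Ioo hab hf hv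
    rwa [← hmono.lt_iff_lt (Ioo_subset_Icc_self hXu) (Ioo_subset_Icc_self hXv),
      apply_invFunOn_of_mem_Ioo hab hf hu, apply_invFunOn_of_mem_Ioo hab hf hv]

theorem continuousAt_invFunOn {v : ℝ} (hv : v ∈ Ioo (f a) (f b)) :
    ContinuousAt (invFunOn f (Ioo a b)) v := by
  refine continuousAt_of_monotoneOn_of_image_mem_nhds
    (strictMonoOn_invFunOn hab hf hmono).monotoneOn (isOpen_Ioo.mem_nhds hv) ?_
  refine mem_of_superset (isOpen_Ioo.mem_nhds (invFunOn_mem_Ioo hab hf hv)) fun x hx => ?_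
  exact ⟨f x, hmono.apply_mem_Ioo hx, hmono.invFunOn_Ioo_apply hx⟩

theorem hasDerivAt_invFunOn {v f' : ℝ} (hv : v ∈ Ioo (f a) (f b))
    (hderiv : HasDerivAt f f' (invFunOn f (Ioo a b) v)) (hf' : f' ≠ 0) :
    HasDerivAt (invFunOn f (Ioo a b)) f'⁻¹ v :=
  hderiv.of_local_left_inverse (continuousAt_invFunOn hab hf hmono hv) hf' <| by
    filter_upwards [isOpen_Ioo.mem_nhds hv] with u hu using apply_invFunOn_of_mem_Ioo hab hf hu

theorem tendsto_invFunOn_nhdsGT (hab' : a < b) :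
    Tendsto (invFunOn f (Ioo a b)) (𝓝[>] (f a)) (𝓝[>] a) := by
  have hfab : f a < f b := hmono ⟨le_rfl, hab⟩ ⟨hab, le_rfl⟩ hab'
  refine tendsto_nhdsWithin_iff.2 ⟨tendsto_order.2 ⟨fun l hl => ?_, fun u hu => ?_⟩, ?_⟩
  · filter_upwards [Ioo_mem_nhdsGT hfab] with v hv using hl.trans (invFunOn_mem_Ioo hab hf hv).1
  · obtain ⟨t, hat, ht⟩ := exists_between (lt_min hu hab')
    have htI : t ∈ Ioo a b := ⟨hat, ht.trans_le (min_le_right _ _)⟩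
    filter_upwards [Ioo_mem_nhdsGT (hmono.apply_mem_Ioo htI).1] with v hv
    have hvI : v ∈ Ioo (f a) (f b) := ⟨hv.1, hv.2.trans (hmono.apply_mem_Ioo htI).2⟩
    refine lt_trans ?_ (ht.trans_le (min_le_left _ _))
    rw [← hmono.lt_iff_lt (Ioo_subset_Icc_self (invFunOn_mem_Ioo hab hf hvI))
      (Ioo_subset_Icc_self htI), apply_invFunOn_of_mem_Ioo hab hf hvI]
    exact hv.2
  · filter_upwards [Ioo_mem_nhdsGT hfab] with v hv using (invFunOn_mem_Ioo hab hf hv).1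

end StrictMonoInverse

theorem LipschitzOnWith.sub_le_mul_sub {f : ℝ → ℝ} {K : NNReal} {s : Set ℝ}
    (hf : LipschitzOnWith K f s) {x y : ℝ} (hx : x ∈ s) (hy : y ∈ s) (hxy : x ≤ y) :
    f y - f x ≤ K * (y - x) := by
  have := hf.le_add_mul hy hx
  rw [Real.dist_eq, abs_of_nonneg (sub_nonneg.2 hxy)] at this
  linarith

namespace FisherData

variable (D : FisherData)

theorem monotoneOn_d : MonotoneOn D.d (Ici 0) :=
  monotoneOn_Ici_of_derivWithin_nonneg (D.hd_smooth.differentiableOn two_ne_zero)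
    fun x hx => D.hd' x (le_of_lt hx)

theorem monotoneOn_b : MonotoneOn D.b (Ici 0) :=
  monotoneOn_Ici_of_derivWithin_nonneg (D.hb_smooth.differentiableOn two_ne_zero)
    fun x hx => D.hb' x (le_of_lt hx)

theorem d_nonneg {x : ℝ} (hx : 0 ≤ x) : 0 ≤ D.d x :=
  D.hd0 ▸ D.monotoneOn_d self_mem_Ici hx hx

theorem b_nonneg {x : ℝ} (hx : 0 ≤ x) : 0 ≤ D.b x :=
  D.hb0 ▸ D.monotoneOn_b self_mem_Ici hx hx

theorem exists_lipschitzOnWith (k : ℝ) :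
    ∃ L, LipschitzOnWith L D.d (Icc 0 k) ∧ LipschitzOnWith L D.b (Icc 0 k) := by
  obtain ⟨L₁, h₁⟩ := (D.hd_smooth.mono Icc_subset_Ici_self).exists_lipschitzOnWith two_ne_zero
    (convex_Icc 0 k) isCompact_Icc
  obtain ⟨L₂, h₂⟩ := (D.hb_smooth.mono Icc_subset_Ici_self).exists_lipschitzOnWith two_ne_zero
    (convex_Icc 0 k) isCompact_Icc
  exact ⟨max L₁ L₂, h₁.weaken (le_max_left _ _), h₂.weaken (le_max_right _ _)⟩

variable {k : ℝ} {L : NNReal}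

theorem d_le_mul (hL : LipschitzOnWith L D.d (Icc 0 k)) {x : ℝ} (hx : x ∈ Icc 0 k) :
    D.d x ≤ L * x := by
  simpa [D.hd0] using hL.sub_le_mul_sub ⟨le_rfl, hx.1.trans hx.2⟩ hx hx.1

theorem b_le_mul (hL : LipschitzOnWith L D.b (Icc 0 k)) {x : ℝ} (hx : x ∈ Icc 0 k) :
    D.b x ≤ L * x := by
  simpa [D.hb0] using hL.sub_le_mul_sub ⟨le_rfl, hx.1.trans hx.2⟩ hx hx.1

end FisherData

noncomputable def phiPowDeriv (m : ℝ) (φ : ℝ → ℝ) : ℝ → ℝ := deriv (phiPow m φ)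

noncomputable def profileInv (φ : ℝ → ℝ) (l : ℝ) : ℝ → ℝ := invFunOn φ (Ioo 0 l)

/-- The phase function `ψ̃(v) = m v^{m-1} φ'(φ⁻¹ v)`, with `φ⁻¹` the inverse of `φ` on `(0, l)`. -/
noncomputable def phase (m : ℝ) (φ : ℝ → ℝ) (l v : ℝ) : ℝ :=
  m * v ^ (m - 1) * deriv φ (profileInv φ l v)

/-- A sharp local wave profile restricted to `(0, l]`, a real interval inside its increasing
interval. -/
structure IsIncreasingProfileOn (D : FisherData) (c k l : ℝ) (φ : ℝ → ℝ) : Prop where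
  speed_pos : 0 < c
  length_pos : 0 < l
  continuous : Continuous φ
  eq_zero : ∀ ξ ≤ 0, φ ξ = 0
  mem_Ioo : ∀ ξ ∈ Ioc 0 l, φ ξ ∈ Ioo 0 k
  differentiableAt : ∀ ξ ∈ Ioc 0 l, DifferentiableAt ℝ φ ξ
  differentiableAt_phiPowDeriv : ∀ ξ ∈ Ioc 0 l, DifferentiableAt ℝ (phiPowDeriv D.m φ) ξ
  tendsto_phiPowDeriv : Tendsto (phiPowDeriv D.m φ) (𝓝[>] 0) (𝓝 0)
  ode : ∀ ξ ∈ Ioc 0 l,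
    c * deriv φ ξ = deriv (phiPowDeriv D.m φ) ξ - D.d (φ ξ) + D.b (φ (ξ - c * D.r))
  strictMonoOn : StrictMonoOn φ (Ioc 0 l)

theorem IsSharpLocalProfile.isIncreasingProfileOn {D : FisherData} {c k : ℝ} {ξ₀ ξh : EReal}
    {φ : ℝ → ℝ} (h : IsSharpLocalProfile D c k ξ₀ φ) (hc : 0 < c) (hξh : ξh ≤ ξ₀)
    (hmono : StrictMonoOn φ {ξ : ℝ | 0 < ξ ∧ (ξ : EReal) < ξh}) {l : ℝ} (hl : 0 < l)
    (hlξh : (l : EReal) < ξh) : IsIncreasingProfileOn D c k l φ := by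
  obtain ⟨-, hcont, hzero, hmem, hdiff, -, hdiff', hlim, hode⟩ := h
  have hsub : ∀ ξ ∈ Ioc 0 l, 0 < ξ ∧ (ξ : EReal) < ξh := fun ξ hξ =>
    ⟨hξ.1, (EReal.coe_le_coe_iff.2 hξ.2).trans_lt hlξh⟩
  have hdom : ∀ ξ ∈ Ioc 0 l, (ξ : EReal) < ξ₀ := fun ξ hξ => (hsub ξ hξ).2.trans_le hξh
  exact ⟨hc, hl, hcont, hzero, fun ξ hξ => hmem ξ hξ.1 (hdom ξ hξ),
    fun ξ hξ => hdiff ξ hξ.1 (hdom ξ hξ), fun ξ hξ => hdiff' ξ hξ.1 (hdom ξ hξ), hlim,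
    fun ξ hξ => hode ξ hξ.1 (hdom ξ hξ), hmono.mono hsub⟩

namespace IsIncreasingProfileOn

variable {D : FisherData} {c k l : ℝ} {φ : ℝ → ℝ} (hφ : IsIncreasingProfileOn D c k l φ)
include hφ

theorem strictMonoOn_Icc : StrictMonoOn φ (Icc 0 l) := by
  intro x hx y hy hxy
  rcases hx.1.eq_or_lt with rfl | hx0
  · rw [hφ.eq_zero 0 le_rfl]
    exact (hφ.mem_Ioo y ⟨hxy, hy.2⟩).1
  · exact hφ.strictMonoOn ⟨hx0, hx.2⟩ ⟨hx0.trans hxy, hy.2⟩ hxy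

theorem monotoneOn_Iic : MonotoneOn φ (Iic l) := by
  intro x hx y hy hxy
  rcases le_or_gt x 0 with hx0 | hx0
  · rw [hφ.eq_zero x hx0]
    rcases le_or_gt y 0 with hy0 | hy0
    · rw [hφ.eq_zero y hy0]
    · exact (hφ.mem_Ioo y ⟨hy0, hy⟩).1.le
  · exact hφ.strictMonoOn.monotoneOn ⟨hx0, hx⟩ ⟨hx0.trans_le hxy, hy⟩ hxy

theorem mem_Icc {ξ : ℝ} (hξ : ξ ≤ l) : φ ξ ∈ Icc 0 k := by
  rcases le_or_gt ξ 0 with hξ0 | hξ0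
  · have hl := hφ.mem_Ioo l ⟨hφ.length_pos, le_rfl⟩
    rw [hφ.eq_zero ξ hξ0]
    exact ⟨le_rfl, (hl.1.trans hl.2).le⟩
  · exact Ioo_subset_Icc_self (hφ.mem_Ioo ξ ⟨hξ0, hξ⟩)

theorem hasDerivAt_phiPow {ξ : ℝ} (hξ : ξ ∈ Ioc 0 l) :
    HasDerivAt (phiPow D.m φ) (D.m * φ ξ ^ (D.m - 1) * deriv φ ξ) ξ :=
  (Real.hasDerivAt_rpow_const (Or.inl (hφ.mem_Ioo ξ hξ).1.ne')).comp ξ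
    (hφ.differentiableAt ξ hξ).hasDerivAt

theorem phiPowDeriv_eq {ξ : ℝ} (hξ : ξ ∈ Ioc 0 l) :
    phiPowDeriv D.m φ ξ = D.m * φ ξ ^ (D.m - 1) * deriv φ ξ :=
  (hφ.hasDerivAt_phiPow hξ).deriv

theorem deriv_nonneg {ξ : ℝ} (hξ : ξ ∈ Ioc 0 l) : 0 ≤ deriv φ ξ :=
  (hφ.differentiableAt ξ hξ).hasDerivAt.nonneg_of_eventually_le_left <| by
    filter_upwards [Ioo_mem_nhdsLT hξ.1] with y hy
    exact hφ.strictMonoOn.monotoneOn ⟨hy.1, hy.2.le.trans hξ.2⟩ hξ hy.2.le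

theorem phiPowDeriv_nonneg {ξ : ℝ} (hξ : ξ ∈ Ioc 0 l) : 0 ≤ phiPowDeriv D.m φ ξ :=
  hφ.phiPowDeriv_eq hξ ▸ mul_nonneg (mul_nonneg (by linarith [D.hm])
    (Real.rpow_nonneg (hφ.mem_Ioo ξ hξ).1.le _)) (hφ.deriv_nonneg hξ)

theorem hasDerivAt_phiPowDeriv {ξ : ℝ} (hξ : ξ ∈ Ioc 0 l) :
    HasDerivAt (phiPowDeriv D.m φ)
      (c * deriv φ ξ + D.d (φ ξ) - D.b (φ (ξ - c * D.r))) ξ := by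
  have hode : c * deriv φ ξ + D.d (φ ξ) - D.b (φ (ξ - c * D.r)) =
      deriv (phiPowDeriv D.m φ) ξ := by
    linarith [hφ.ode ξ hξ]
  exact hode ▸ (hφ.differentiableAt_phiPowDeriv ξ hξ).hasDerivAt

theorem deriv_add_deriv_phiPowDeriv_le {L : NNReal} (hLd : LipschitzOnWith L D.d (Icc 0 k))
    {ξ s : ℝ} (hξ : 0 < ξ) (hs : s ∈ Icc ξ l)
    (hbalance : D.b (φ (ξ - c * D.r)) = D.d (φ ξ)) :
    deriv φ s + deriv (phiPowDeriv D.m φ) s ≤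
      max ((1 + c) / (D.m * φ ξ ^ (D.m - 1))) L * (φ s - φ ξ + phiPowDeriv D.m φ s) := by
  have hξ' : ξ ∈ Ioc 0 l := ⟨hξ, hs.1.trans hs.2⟩
  have hs' : s ∈ Ioc 0 l := ⟨hξ.trans_le hs.1, hs.2⟩
  have hc := hφ.speed_pos
  have hcr : 0 ≤ c * D.r := mul_nonneg hc.le D.hr
  have hγ : 0 < D.m * φ ξ ^ (D.m - 1) :=
    mul_pos (by linarith [D.hm]) (Real.rpow_pos_of_pos (hφ.mem_Ioo ξ hξ').1 _)
  have hvs : φ ξ ≤ φ s := hφ.monotoneOn_Iic hξ'.2 hs'.2 hs.1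
  have hγs : D.m * φ ξ ^ (D.m - 1) * deriv φ s ≤ phiPowDeriv D.m φ s := by
    rw [hφ.phiPowDeriv_eq hs']
    have := hφ.deriv_nonneg hs'
    have := (hφ.mem_Ioo ξ hξ').1
    have := D.hm
    gcongr
  have hξl : ξ - c * D.r ≤ l := by linarith [hξ'.2]
  have hsl : s - c * D.r ≤ l := by linarith [hs.2]
  have hdelay : D.d (φ ξ) ≤ D.b (φ (s - c * D.r)) := hbalance ▸ D.monotoneOn_b
    (hφ.mem_Icc hξl).1 (hφ.mem_Icc hsl).1 (hφ.monotoneOn_Iic hξl hsl (by linarith [hs.1]))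
  have hlip : D.d (φ s) - D.d (φ ξ) ≤ L * (φ s - φ ξ) :=
    hLd.sub_le_mul_sub (hφ.mem_Icc hξ'.2) (hφ.mem_Icc hs'.2) hvs
  have hw' : deriv (phiPowDeriv D.m φ) s ≤ c * deriv φ s + L * (φ s - φ ξ) := by
    rw [(hφ.hasDerivAt_phiPowDeriv hs').deriv]
    linarith
  have hφ'w : (1 + c) * deriv φ s ≤ (1 + c) / (D.m * φ ξ ^ (D.m - 1)) * phiPowDeriv D.m φ s := by
    rw [div_mul_eq_mul_div, le_div_iff₀ hγ]
    nlinarith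
  have hwK := mul_le_mul_of_nonneg_right (le_max_left ((1 + c) / (D.m * φ ξ ^ (D.m - 1))) L)
    (hφ.phiPowDeriv_nonneg hs')
  have hLK := mul_le_mul_of_nonneg_right (le_max_right ((1 + c) / (D.m * φ ξ ^ (D.m - 1))) L)
    (sub_nonneg.2 hvs)
  linarith

/-- If `φ'` vanished at `ξ`, then `(φ^m)'` would have a minimum there, so the delay term
`b(φ(ξ - cr))` would balance `d(φ ξ)`; then `z = (φ - φ ξ) + (φ^m)'` satisfies `z' ≤ K z` with
`z ξ = 0`, and Grönwall forbids the growth of `φ` on `[ξ, l]`. -/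
theorem deriv_pos {ξ : ℝ} (hξ : ξ ∈ Ioo 0 l) : 0 < deriv φ ξ := by
  have hξ' : ξ ∈ Ioc 0 l := Ioo_subset_Ioc_self hξ
  refine (hφ.deriv_nonneg hξ').lt_of_ne' fun h0 => ?_
  obtain ⟨L, hLd, -⟩ := D.exists_lipschitzOnWith k
  have hw0 : phiPowDeriv D.m φ ξ = 0 := by rw [hφ.phiPowDeriv_eq hξ', h0, mul_zero]
  have hbalance : D.b (φ (ξ - c * D.r)) = D.d (φ ξ) := by
    have hmin : IsLocalMin (phiPowDeriv D.m φ) ξ := by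
      filter_upwards [isOpen_Ioo.mem_nhds hξ] with y hy
      exact hw0 ▸ hφ.phiPowDeriv_nonneg (Ioo_subset_Ioc_self hy)
    have := (hφ.hasDerivAt_phiPowDeriv hξ').deriv ▸ hmin.deriv_eq_zero
    rw [h0] at this
    linarith
  have hderiv : ∀ s ∈ Icc ξ l, HasDerivAt (fun s => φ s - φ ξ + phiPowDeriv D.m φ s)
      (deriv φ s + deriv (phiPowDeriv D.m φ) s) s :=
    fun s hs => ((hφ.differentiableAt s ⟨hξ.1.trans_le hs.1, hs.2⟩).hasDerivAt.sub_const _).add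
      (hφ.differentiableAt_phiPowDeriv s ⟨hξ.1.trans_le hs.1, hs.2⟩).hasDerivAt
  have hz := nonpos_of_hasDerivWithinAt_le_mul
    (fun s hs => (hderiv s hs).continuousAt.continuousWithinAt)
    (fun s hs => (hderiv s (Ico_subset_Icc_self hs)).hasDerivWithinAt) (by simp [hw0])
    (fun s hs => hφ.deriv_add_deriv_phiPowDeriv_le hLd hξ.1 (Ico_subset_Icc_self hs) hbalance)
    l ⟨hξ.2.le, le_rfl⟩
  have hvl : φ ξ < φ l := hφ.strictMonoOn hξ' ⟨hφ.length_pos, le_rfl⟩ hξ.2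
  linarith [hφ.phiPowDeriv_nonneg ⟨hφ.length_pos, le_rfl⟩]

theorem tendsto_edge : Tendsto φ (𝓝[>] 0) (𝓝 0) := by
  simpa [hφ.eq_zero 0 le_rfl] using (hφ.continuous.tendsto 0).mono_left nhdsWithin_le_nhds

theorem exists_abs_phiPowDeriv_sub_le :
    ∃ L : ℝ, ∀ ξ ∈ Ioc 0 l, |phiPowDeriv D.m φ ξ - c * φ ξ| ≤ L * φ ξ * ξ := by
  obtain ⟨L, hLd, hLb⟩ := D.exists_lipschitzOnWith k
  refine ⟨L, fun ξ hξ => ?_⟩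
  have hcr : 0 ≤ c * D.r := mul_nonneg hφ.speed_pos.le D.hr
  have hbound : ∀ y ≤ ξ, D.d (φ y) ∈ Icc 0 (L * φ ξ) ∧ D.b (φ y) ∈ Icc 0 (L * φ ξ) := by
    intro y hy
    have hyI := hφ.mem_Icc (hy.trans hξ.2)
    have hle : L * φ y ≤ L * φ ξ :=
      mul_le_mul_of_nonneg_left (hφ.monotoneOn_Iic (hy.trans hξ.2) hξ.2 hy) L.2
    exact ⟨⟨D.d_nonneg hyI.1, (D.d_le_mul hLd hyI).trans hle⟩,
      ⟨D.b_nonneg hyI.1, (D.b_le_mul hLb hyI).trans hle⟩⟩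
  have := abs_sub_le_mul_of_hasDerivAt_of_tendsto (f := fun s => phiPowDeriv D.m φ s - c * φ s)
    (f' := fun s => D.d (φ s) - D.b (φ (s - c * D.r))) (A := L * φ ξ) hξ.1
    (fun s hs => ((hφ.hasDerivAt_phiPowDeriv ⟨hs.1, hs.2.trans hξ.2⟩).sub
      ((hφ.differentiableAt s ⟨hs.1, hs.2.trans hξ.2⟩).hasDerivAt.const_mul c)).congr_deriv
      (by ring))
    (fun s hs => by
      obtain ⟨⟨hd₀, hdL⟩, -⟩ := hbound s hs.2
      obtain ⟨-, ⟨hb₀, hbL⟩⟩ := hbound (s - c * D.r) (by linarith [hs.2])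
      exact abs_sub_le_iff.2 ⟨by linarith, by linarith⟩)
    (by simpa using hφ.tendsto_phiPowDeriv.sub (hφ.tendsto_edge.const_mul c))
  simpa using this

theorem tendsto_phiPowDeriv_div :
    Tendsto (fun ξ => phiPowDeriv D.m φ ξ / φ ξ) (𝓝[>] 0) (𝓝 c) := by
  obtain ⟨L, hL⟩ := hφ.exists_abs_phiPowDeriv_sub_le
  rw [← tendsto_sub_nhds_zero_iff]
  refine squeeze_zero_norm' ?_ (tendsto_nhdsWithin_of_tendsto_nhds
    (by simpa using (continuous_const_mul L).tendsto 0))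
  filter_upwards [Ioo_mem_nhdsGT hφ.length_pos] with ξ hξ
  have hpos := (hφ.mem_Ioo ξ ⟨hξ.1, hξ.2.le⟩).1
  rw [Real.norm_eq_abs, div_sub' hpos.ne', abs_div, abs_of_pos hpos, div_le_iff₀ hpos]
  have := hL ξ ⟨hξ.1, hξ.2.le⟩
  rw [mul_comm (φ ξ) c]
  linarith

theorem profileInv_mem {v : ℝ} (hv : v ∈ Ioo 0 (φ l)) : profileInv φ l v ∈ Ioo 0 l :=
  invFunOn_mem_Ioo hφ.length_pos.le hφ.continuous.continuousOn (by rwa [hφ.eq_zero 0 le_rfl])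

theorem apply_profileInv {v : ℝ} (hv : v ∈ Ioo 0 (φ l)) : φ (profileInv φ l v) = v :=
  apply_invFunOn_of_mem_Ioo hφ.length_pos.le hφ.continuous.continuousOn
    (by rwa [hφ.eq_zero 0 le_rfl])

theorem profileInv_apply {ξ : ℝ} (hξ : ξ ∈ Ioo 0 l) : profileInv φ l (φ ξ) = ξ :=
  hφ.strictMonoOn_Icc.invFunOn_Ioo_apply hξ

theorem hasDerivAt_profileInv {v : ℝ} (hv : v ∈ Ioo 0 (φ l)) :
    HasDerivAt (profileInv φ l) (deriv φ (profileInv φ l v))⁻¹ v := by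
  have hX := hφ.profileInv_mem hv
  exact hasDerivAt_invFunOn hφ.length_pos.le hφ.continuous.continuousOn hφ.strictMonoOn_Icc
    (by rwa [hφ.eq_zero 0 le_rfl]) (hφ.differentiableAt _ (Ioo_subset_Ioc_self hX)).hasDerivAt
    (hφ.deriv_pos hX).ne'

theorem tendsto_profileInv : Tendsto (profileInv φ l) (𝓝[>] 0) (𝓝[>] 0) := by
  simpa [profileInv, hφ.eq_zero 0 le_rfl] using tendsto_invFunOn_nhdsGT hφ.length_pos.le
    hφ.continuous.continuousOn hφ.strictMonoOn_Icc hφ.length_pos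

theorem phase_eq {v : ℝ} (hv : v ∈ Ioo 0 (φ l)) :
    phase D.m φ l v = phiPowDeriv D.m φ (profileInv φ l v) := by
  rw [hφ.phiPowDeriv_eq (Ioo_subset_Ioc_self (hφ.profileInv_mem hv)), hφ.apply_profileInv hv,
    phase]

theorem phase_apply {ξ : ℝ} (hξ : ξ ∈ Ioo 0 l) :
    phase D.m φ l (φ ξ) = D.m * φ ξ ^ (D.m - 1) * deriv φ ξ := by
  rw [phase, hφ.profileInv_apply hξ]

theorem hasDerivAt_phase {v : ℝ} (hv : v ∈ Ioo 0 (φ l)) :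
    HasDerivAt (phase D.m φ l)
      (c + (D.d v - D.b (φ (profileInv φ l v - c * D.r))) / deriv φ (profileInv φ l v)) v := by
  have hX := hφ.profileInv_mem hv
  have hq := (hφ.deriv_pos hX).ne'
  have hcomp := (hφ.hasDerivAt_phiPowDeriv (Ioo_subset_Ioc_self hX)).comp v
    (hφ.hasDerivAt_profileInv hv)
  rw [hφ.apply_profileInv hv] at hcomp
  refine (hcomp.congr_deriv ?_).congr_of_eventuallyEq ?_
  · field_simp
    ring
  · filter_upwards [isOpen_Ioo.mem_nhds hv] with u hu using hφ.phase_eq hu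

theorem tendsto_phase_div : Tendsto (fun v => phase D.m φ l v / v) (𝓝[>] 0) (𝓝 c) := by
  refine (hφ.tendsto_phiPowDeriv_div.comp hφ.tendsto_profileInv).congr' ?_
  filter_upwards [Ioo_mem_nhdsGT (hφ.mem_Ioo l ⟨hφ.length_pos, le_rfl⟩).1] with v hv
  simp only [comp_apply, hφ.apply_profileInv hv, hφ.phase_eq hv]

end IsIncreasingProfileOn

section Comparison

variable {D : FisherData} {c₁ c₂ k l₁ l₂ : ℝ} {φ₁ φ₂ : ℝ → ℝ}
  (hφ₁ : IsIncreasingProfileOn D c₁ k l₁ φ₁) (hφ₂ : IsIncreasingProfileOn D c₂ k l₂ φ₂)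
include hφ₁ hφ₂

theorem profileInv_sub_profileInv_le {u : ℝ} (hu₁ : u < φ₁ l₁) (hu₂ : u < φ₂ l₂)
    (hle : ∀ v ∈ Ioc 0 u, phase D.m φ₂ l₂ v ≤ phase D.m φ₁ l₁ v) {w : ℝ} (hw : 0 < w)
    (hwu : w ≤ u) :
    profileInv φ₂ l₂ w - profileInv φ₁ l₁ w ≤ profileInv φ₂ l₂ u - profileInv φ₁ l₁ u := by
  have hmem : ∀ v ∈ Icc w u, v ∈ Ioo 0 (φ₁ l₁) ∧ v ∈ Ioo 0 (φ₂ l₂) := fun v hv =>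
    ⟨⟨hw.trans_le hv.1, hv.2.trans_lt hu₁⟩, ⟨hw.trans_le hv.1, hv.2.trans_lt hu₂⟩⟩
  have hderiv : ∀ v ∈ Icc w u, HasDerivAt (fun v => profileInv φ₂ l₂ v - profileInv φ₁ l₁ v)
      ((deriv φ₂ (profileInv φ₂ l₂ v))⁻¹ - (deriv φ₁ (profileInv φ₁ l₁ v))⁻¹) v := fun v hv =>
    (hφ₂.hasDerivAt_profileInv (hmem v hv).2).sub (hφ₁.hasDerivAt_profileInv (hmem v hv).1)
  refine monotoneOn_of_hasDerivWithinAt_nonneg (convex_Icc w u)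
    (fun v hv => (hderiv v hv).continuousAt.continuousWithinAt)
    (fun v hv => (hderiv v (interior_subset hv)).hasDerivWithinAt) (fun v hv => ?_)
    ⟨le_rfl, hwu⟩ ⟨hwu, le_rfl⟩ hwu
  rw [interior_Icc] at hv
  obtain ⟨hv₁, hv₂⟩ := hmem v (Ioo_subset_Icc_self hv)
  have hq : deriv φ₂ (profileInv φ₂ l₂ v) ≤ deriv φ₁ (profileInv φ₁ l₁ v) :=
    le_of_mul_le_mul_left (hle v ⟨hv₁.1, hv.2.le⟩)
      (mul_pos (by linarith [D.hm]) (Real.rpow_pos_of_pos hv₁.1 _))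
  exact sub_nonneg.2 (inv_anti₀ (hφ₂.deriv_pos (hφ₂.profileInv_mem hv₂)) hq)

theorem apply_profileInv_sub_le (hc : c₂ ≤ c₁) {u : ℝ} (hu₀ : 0 < u) (hu₁ : u < φ₁ l₁)
    (hu₂ : u < φ₂ l₂) (hle : ∀ v ∈ Ioc 0 u, phase D.m φ₂ l₂ v ≤ phase D.m φ₁ l₁ v) :
    φ₁ (profileInv φ₁ l₁ u - c₁ * D.r) ≤ φ₂ (profileInv φ₂ l₂ u - c₂ * D.r) := by
  have hX₁ := hφ₁.profileInv_mem ⟨hu₀, hu₁⟩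
  have hX₂ := hφ₂.profileInv_mem ⟨hu₀, hu₂⟩
  have hcr : c₂ * D.r ≤ c₁ * D.r := mul_le_mul_of_nonneg_right hc D.hr
  have hc₂r : 0 ≤ c₂ * D.r := mul_nonneg hφ₂.speed_pos.le D.hr
  have hdelay₂ : profileInv φ₂ l₂ u - c₂ * D.r ≤ l₂ := by linarith [hX₂.2]
  rcases le_or_gt (profileInv φ₁ l₁ u - c₁ * D.r) 0 with hξ | hξ
  · rw [hφ₁.eq_zero _ hξ]
    exact (hφ₂.mem_Icc hdelay₂).1
  set w := φ₁ (profileInv φ₁ l₁ u - c₁ * D.r)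
  have hξ' : profileInv φ₁ l₁ u - c₁ * D.r ∈ Ioo 0 l₁ := ⟨hξ, by linarith [hX₁.2]⟩
  have hw : 0 < w := (hφ₁.mem_Ioo _ (Ioo_subset_Ioc_self hξ')).1
  have hwu : w ≤ u := hφ₁.apply_profileInv ⟨hu₀, hu₁⟩ ▸
    hφ₁.monotoneOn_Iic hξ'.2.le hX₁.2.le (by linarith)
  have hgap := profileInv_sub_profileInv_le hφ₁ hφ₂ hu₁ hu₂ hle hw hwu
  rw [hφ₁.profileInv_apply hξ'] at hgap
  have hXw := hφ₂.profileInv_mem ⟨hw, hwu.trans_lt hu₂⟩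
  calc w = φ₂ (profileInv φ₂ l₂ w) := (hφ₂.apply_profileInv ⟨hw, hwu.trans_lt hu₂⟩).symm
    _ ≤ φ₂ (profileInv φ₂ l₂ u - c₂ * D.r) :=
      hφ₂.monotoneOn_Iic hXw.2.le hdelay₂ (by linarith)

theorem eventually_phase_lt_phase (hc : c₂ < c₁) :
    ∀ᶠ u in 𝓝[>] 0, phase D.m φ₂ l₂ u < phase D.m φ₁ l₁ u := by
  filter_upwards [(hφ₁.tendsto_phase_div.sub hφ₂.tendsto_phase_div).eventually
    (lt_mem_nhds (sub_pos.2 hc)), self_mem_nhdsWithin] with u hu (hu₀ : 0 < u)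
  rw [div_sub_div_same] at hu
  exact sub_pos.1 ((div_pos_iff_of_pos_right hu₀).1 hu)

theorem phase_lt_phase (hc : c₂ < c₁) {v : ℝ} (hv₀ : 0 < v) (hv₁ : v < φ₁ l₁)
    (hv₂ : v < φ₂ l₂) : phase D.m φ₂ l₂ v < phase D.m φ₁ l₁ v := by
  by_contra hcon
  have hmem : ∀ u ∈ Ioc 0 v, u ∈ Ioo 0 (φ₁ l₁) ∧ u ∈ Ioo 0 (φ₂ l₂) := fun u hu =>
    ⟨⟨hu.1, hu.2.trans_lt hv₁⟩, ⟨hu.1, hu.2.trans_lt hv₂⟩⟩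
  have hderiv := fun u (hu : u ∈ Ioc 0 v) =>
    (hφ₁.hasDerivAt_phase (hmem u hu).1).sub (hφ₂.hasDerivAt_phase (hmem u hu).2)
  obtain ⟨u, hu, hzero, hpos⟩ := exists_first_zero_of_eventually_pos
    (f := fun u => phase D.m φ₁ l₁ u - phase D.m φ₂ l₂ u) hv₀
    (fun u hu => (hderiv u hu).continuousAt.continuousWithinAt)
    ((eventually_phase_lt_phase hφ₁ hφ₂ hc).mono fun u hu => sub_pos.2 hu) (by linarith)
  obtain ⟨hu₁, hu₂⟩ := hmem u hu
  have hq : deriv φ₁ (profileInv φ₁ l₁ u) = deriv φ₂ (profileInv φ₂ l₂ u) :=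
    mul_left_cancel₀ (mul_pos (by linarith [D.hm]) (Real.rpow_pos_of_pos hu.1 _)).ne'
      (sub_eq_zero.1 hzero)
  have hξ₁ : profileInv φ₁ l₁ u - c₁ * D.r ≤ l₁ := by
    linarith [(hφ₁.profileInv_mem hu₁).2, mul_nonneg hφ₁.speed_pos.le D.hr]
  have hξ₂ : profileInv φ₂ l₂ u - c₂ * D.r ≤ l₂ := by
    linarith [(hφ₂.profileInv_mem hu₂).2, mul_nonneg hφ₂.speed_pos.le D.hr]
  have hdelay := D.monotoneOn_b (hφ₁.mem_Icc hξ₁).1 (hφ₂.mem_Icc hξ₂).1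
    (apply_profileInv_sub_le hφ₁ hφ₂ hc.le hu.1 hu₁.2 hu₂.2 fun w hw =>
      sub_nonneg.1 ((hw.2.eq_or_lt).elim (fun h => h ▸ hzero.ge) fun h => (hpos w ⟨hw.1, h⟩).le))
  have hslope := (hderiv u hu).nonpos_of_eventually_ge_left <| by
    filter_upwards [Ioo_mem_nhdsLT hu.1] with w hw
    simpa only [Pi.sub_apply, hzero] using (hpos w hw).le
  rw [hq] at hslope
  set q := deriv φ₂ (profileInv φ₂ l₂ u)
  set B₁ := D.b (φ₁ (profileInv φ₁ l₁ u - c₁ * D.r))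
  set B₂ := D.b (φ₂ (profileInv φ₂ l₂ u - c₂ * D.r))
  have hgain : 0 ≤ (B₂ - B₁) / q :=
    div_nonneg (sub_nonneg.2 hdelay) (hφ₂.deriv_pos (hφ₂.profileInv_mem hu₂)).le
  have hsplit : c₁ + (D.d u - B₁) / q - (c₂ + (D.d u - B₂) / q) = c₁ - c₂ + (B₂ - B₁) / q := by
    ring
  linarith

end Comparison

theorem phase_comparison_general (D : FisherData) (k c₁ c₂ : ℝ)
    (hc₂ : 0 < c₂) (hc : c₂ < c₁)
    (ξ₀₁ ξ₀₂ : EReal) (φ₁ φ₂ : ℝ → ℝ)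
    (h₁ : IsSharpLocalProfile D c₁ k ξ₀₁ φ₁)
    (h₂ : IsSharpLocalProfile D c₂ k ξ₀₂ φ₂)
    (ξh₁ ξh₂ : EReal)
    (hξh₁le : ξh₁ ≤ ξ₀₁)
    (hmono₁ : StrictMonoOn φ₁ {ξ : ℝ | 0 < ξ ∧ (ξ : EReal) < ξh₁})
    (hξh₂le : ξh₂ ≤ ξ₀₂)
    (hmono₂ : StrictMonoOn φ₂ {ξ : ℝ | 0 < ξ ∧ (ξ : EReal) < ξh₂}) :
    ∀ ξ₁ ξ₂ : ℝ, 0 < ξ₁ → (ξ₁ : EReal) < ξh₁ → 0 < ξ₂ → (ξ₂ : EReal) < ξh₂ →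
      φ₁ ξ₁ = φ₂ ξ₂ → deriv φ₂ ξ₂ < deriv φ₁ ξ₁ := by
  intro ξ₁ ξ₂ hξ₁ hξ₁h hξ₂ hξ₂h hval
  obtain ⟨l₁, hξl₁, hl₁⟩ := EReal.lt_iff_exists_real_btwn.1 hξ₁h
  obtain ⟨l₂, hξl₂, hl₂⟩ := EReal.lt_iff_exists_real_btwn.1 hξ₂h
  have hξ₁' : ξ₁ ∈ Ioo 0 l₁ := ⟨hξ₁, EReal.coe_lt_coe_iff.1 hξl₁⟩
  have hξ₂' : ξ₂ ∈ Ioo 0 l₂ := ⟨hξ₂, EReal.coe_lt_coe_iff.1 hξl₂⟩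
  have hφ₁ := h₁.isIncreasingProfileOn (hc₂.trans hc) hξh₁le hmono₁ (hξ₁.trans hξ₁'.2) hl₁
  have hφ₂ := h₂.isIncreasingProfileOn hc₂ hξh₂le hmono₂ (hξ₂.trans hξ₂'.2) hl₂
  have hv₁ : φ₁ ξ₁ < φ₁ l₁ := hφ₁.strictMonoOn (Ioo_subset_Ioc_self hξ₁')
    ⟨hφ₁.length_pos, le_rfl⟩ hξ₁'.2
  have hv₂ : φ₁ ξ₁ < φ₂ l₂ := hval ▸ hφ₂.strictMonoOn (Ioo_subset_Ioc_self hξ₂')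
    ⟨hφ₂.length_pos, le_rfl⟩ hξ₂'.2
  have hv₀ : 0 < φ₁ ξ₁ := (hφ₁.mem_Ioo ξ₁ (Ioo_subset_Ioc_self hξ₁')).1
  have hlt := phase_lt_phase hφ₁ hφ₂ hc hv₀ hv₁ hv₂
  rw [hφ₁.phase_apply hξ₁', hval, hφ₂.phase_apply hξ₂'] at hlt
  exact lt_of_mul_lt_mul_left hlt
    (mul_nonneg (by linarith [D.hm]) (Real.rpow_nonneg (hval ▸ hv₀).le _))

/-- phase comparison principle: for maximal sharp local wave profiles
with the same ceiling `k` and speeds `c₁ > c₂ > 0`, at points of their maximal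
increasing intervals where the profiles take the same value, the faster profile
has the strictly larger derivative. -/
theorem phase_comparison (D : FisherData) (k c₁ c₂ : ℝ)
    (hk : D.κ ≤ k) (hc₂ : 0 < c₂) (hc : c₂ < c₁)
    (ξ₀₁ ξ₀₂ : EReal) (φ₁ φ₂ : ℝ → ℝ)
    (h₁ : IsSharpLocalProfile D c₁ k ξ₀₁ φ₁) (he₁ : EdgeAsymp D.m c₁ φ₁)
    (hmax₁ : ∀ (ξ₀' : EReal) (φ' : ℝ → ℝ),
      IsSharpLocalProfile D c₁ k ξ₀' φ' → EdgeAsymp D.m c₁ φ' → ξ₀' ≤ ξ₀₁)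
    (h₂ : IsSharpLocalProfile D c₂ k ξ₀₂ φ₂) (he₂ : EdgeAsymp D.m c₂ φ₂)
    (hmax₂ : ∀ (ξ₀' : EReal) (φ' : ℝ → ℝ),
      IsSharpLocalProfile D c₂ k ξ₀' φ' → EdgeAsymp D.m c₂ φ' → ξ₀' ≤ ξ₀₂)
    (ξh₁ ξh₂ : EReal)
    (hξh₁pos : 0 < ξh₁) (hξh₁le : ξh₁ ≤ ξ₀₁)
    (hmono₁ : StrictMonoOn φ₁ {ξ : ℝ | 0 < ξ ∧ (ξ : EReal) < ξh₁})
    (hξh₁max : ∀ ζ : EReal, ζ ≤ ξ₀₁ →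
      StrictMonoOn φ₁ {ξ : ℝ | 0 < ξ ∧ (ξ : EReal) < ζ} → ζ ≤ ξh₁)
    (hξh₂pos : 0 < ξh₂) (hξh₂le : ξh₂ ≤ ξ₀₂)
    (hmono₂ : StrictMonoOn φ₂ {ξ : ℝ | 0 < ξ ∧ (ξ : EReal) < ξh₂})
    (hξh₂max : ∀ ζ : EReal, ζ ≤ ξ₀₂ →
      StrictMonoOn φ₂ {ξ : ℝ | 0 < ξ ∧ (ξ : EReal) < ζ} → ζ ≤ ξh₂) :
    ∀ ξ₁ ξ₂ : ℝ, 0 < ξ₁ → (ξ₁ : EReal) < ξh₁ → 0 < ξ₂ → (ξ₂ : EReal) < ξh₂ →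
      φ₁ ξ₁ = φ₂ ξ₂ → deriv φ₂ ξ₂ < deriv φ₁ ξ₁ :=
  phase_comparison_general D k c₁ c₂ hc₂ hc ξ₀₁ ξ₀₂ φ₁ φ₂ h₁ h₂ ξh₁ ξh₂ hξh₁le hmono₁ hξh₂le hmono₂
end

section
/- Assume (H), and let M > 0. If U : [−r, ∞) → ℝ is continuous with U(s) = M for all s ∈ [−r, 0], differentiable on (0, ∞), and satisfies the delayed ordinary differential equation U'(t) = −d(U(t)) + b(U(t − r)) for all t > 0, then U(t) → κ as t → +∞. -/
open Real Filter Set MeasureTheory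

/-- One-sided test: if `x` is a right endpoint maximum of `f` on `[a, x]`, then `f' x ≥ 0`. -/
private lemma deriv_nonneg_of_left_le {f : ℝ → ℝ} {f' x a : ℝ}
    (hd : HasDerivAt f f' x) (ha : a < x) (h : ∀ y, a ≤ y → y < x → f y ≤ f x) :
    0 ≤ f' := by
  have ht : Filter.Tendsto (slope f x) (nhdsWithin x (Set.Iio x)) (nhds f') :=
    (hasDerivAt_iff_tendsto_slope.mp hd).mono_left
      (nhdsWithin_mono x fun y hy => ne_of_lt hy)
  refine ge_of_tendsto ht ?_
  filter_upwards [Ioo_mem_nhdsLT_of_mem (Set.mem_Ioc.mpr ⟨ha, le_refl x⟩)] with y hy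
  rw [slope_def_field]
  exact div_nonneg_of_nonpos (sub_nonpos.mpr (h y hy.1.le hy.2)) (sub_neg.mpr hy.2).le

/-- One-sided test: if `x` is a right endpoint minimum of `f` on `[a, x]`, then `f' x ≤ 0`. -/
private lemma deriv_nonpos_of_left_ge {f : ℝ → ℝ} {f' x a : ℝ}
    (hd : HasDerivAt f f' x) (ha : a < x) (h : ∀ y, a ≤ y → y < x → f x ≤ f y) :
    f' ≤ 0 := by
  have ht : Filter.Tendsto (slope f x) (nhdsWithin x (Set.Iio x)) (nhds f') :=
    (hasDerivAt_iff_tendsto_slope.mp hd).mono_left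
      (nhdsWithin_mono x fun y hy => ne_of_lt hy)
  refine le_of_tendsto ht ?_
  filter_upwards [Ioo_mem_nhdsLT_of_mem (Set.mem_Ioc.mpr ⟨ha, le_refl x⟩)] with y hy
  rw [slope_def_field]
  exact div_nonpos_of_nonneg_of_nonpos (sub_nonneg.mpr (h y hy.1.le hy.2)) (sub_nonpos.mpr hy.2.le)

lemma FisherData.mono_d (D : FisherData) : MonotoneOn D.d (Set.Ici 0) := by
  apply monotoneOn_of_deriv_nonneg (convex_Ici 0) D.hd_smooth.continuousOn
  · rw [interior_Ici]
    exact (D.hd_smooth.differentiableOn two_ne_zero).mono Ioi_subset_Ici_self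
  · intro x hx
    rw [interior_Ici] at hx
    rw [← derivWithin_of_mem_nhds (Ici_mem_nhds hx)]
    exact D.hd' x hx.le

lemma FisherData.mono_b (D : FisherData) : MonotoneOn D.b (Set.Ici 0) := by
  apply monotoneOn_of_deriv_nonneg (convex_Ici 0) D.hb_smooth.continuousOn
  · rw [interior_Ici]
    exact (D.hb_smooth.differentiableOn two_ne_zero).mono Ioi_subset_Ici_self
  · intro x hx
    rw [interior_Ici] at hx
    rw [← derivWithin_of_mem_nhds (Ici_mem_nhds hx)]
    exact D.hb' x hx.le

lemma FisherData.contAt_d (D : FisherData) {s : ℝ} (hs : 0 < s) : ContinuousAt D.d s :=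
  D.hd_smooth.continuousOn.continuousAt (Ici_mem_nhds hs)

lemma FisherData.contAt_b (D : FisherData) {s : ℝ} (hs : 0 < s) : ContinuousAt D.b s :=
  D.hb_smooth.continuousOn.continuousAt (Ici_mem_nhds hs)

lemma FisherData.d_lt_b (D : FisherData) {s : ℝ} (h1 : 0 < s) (h2 : s < D.κ) : D.d s < D.b s := by
  have := D.hsign s h1 (ne_of_lt h2)
  nlinarith

lemma FisherData.b_lt_d (D : FisherData) {s : ℝ} (h2 : D.κ < s) : D.b s < D.d s := by
  have := D.hsign s (lt_trans D.hκ h2) (ne_of_gt h2)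
  nlinarith

/-- First hitting time argument: if `U` starts at `M > c₁` and cannot have a
right-endpoint minimum at level `c₁`, then `U` stays above `c₁`. -/
private lemma low_bound_aux (r : ℝ) (hr : 0 ≤ r) (U : ℝ → ℝ) (M c₁ : ℝ)
    (hc₁M : c₁ < M)
    (hcont : ContinuousOn U (Set.Ici (-r)))
    (hinit : ∀ s ∈ Set.Icc (-r) 0, U s = M)
    (hkey : ∀ t1, 0 < t1 → U t1 = c₁ → (∀ y, -r ≤ y → y < t1 → U t1 ≤ U y) → False) :
    ∀ t, -r ≤ t → c₁ < U t := by
  by_contra hcon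
  push_neg at hcon
  obtain ⟨t₀, ht₀r, ht₀⟩ := hcon
  set A := {t : ℝ | 0 ≤ t ∧ U t ≤ c₁} with hA
  have ht₀0 : 0 ≤ t₀ := by
    by_contra h
    push_neg at h
    rw [hinit t₀ ⟨ht₀r, h.le⟩] at ht₀
    linarith
  have hAne : A.Nonempty := ⟨t₀, ht₀0, ht₀⟩
  have hbdd : BddBelow A := ⟨0, fun x hx => hx.1⟩
  have hAclosed : IsClosed A := by
    apply IsSeqClosed.isClosed
    intro xs x hxs hx
    have hx0 : 0 ≤ x := ge_of_tendsto hx (Eventually.of_forall fun n => (hxs n).1)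
    have hx' : Tendsto xs atTop (nhdsWithin x (Set.Ici (-r))) := by
      apply tendsto_nhdsWithin_of_tendsto_nhds_of_eventually_within _ hx
      exact Eventually.of_forall fun n => le_trans (neg_nonpos.mpr hr) (hxs n).1
    have hUx : Tendsto (fun n => U (xs n)) atTop (nhds (U x)) :=
      ((hcont x (le_trans (neg_nonpos.mpr hr) hx0)).tendsto).comp hx'
    exact ⟨hx0, le_of_tendsto hUx (Eventually.of_forall fun n => (hxs n).2)⟩
  set t1 := sInf A with ht1def
  have ht1A : t1 ∈ A := hAclosed.csInf_mem hAne hbdd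
  have ht1pos : 0 < t1 := by
    rcases lt_or_eq_of_le ht1A.1 with h | h
    · exact h
    · exfalso
      have : U t1 = M := hinit t1 ⟨by linarith [neg_nonpos.mpr hr], h.symm.le⟩
      linarith [ht1A.2]
  have hmin : ∀ y, -r ≤ y → y < t1 → c₁ < U y := by
    intro y hy hyt
    rcases le_or_gt y 0 with h0 | h0
    · rw [hinit y ⟨hy, h0⟩]; exact hc₁M
    · by_contra h
      push_neg at h
      exact absurd (csInf_le hbdd ⟨h0.le, h⟩) (not_le.mpr hyt)
  have hge : c₁ ≤ U t1 := by
    haveI : (nhdsWithin t1 (Set.Ico 0 t1)).NeBot := by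
      apply mem_closure_iff_nhdsWithin_neBot.mp
      rw [closure_Ico (ne_of_lt ht1pos)]
      exact ⟨ht1pos.le, le_refl _⟩
    have htd : Tendsto U (nhdsWithin t1 (Set.Ico 0 t1)) (nhds (U t1)) := by
      apply ((hcont t1 (le_trans (neg_nonpos.mpr hr) ht1A.1)).tendsto).mono_left
      apply nhdsWithin_mono
      intro y hy
      exact le_trans (neg_nonpos.mpr hr) hy.1
    refine ge_of_tendsto htd ?_
    filter_upwards [self_mem_nhdsWithin] with y hy
    exact (hmin y (le_trans (neg_nonpos.mpr hr) hy.1) hy.2).le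
  have hUt1 : U t1 = c₁ := le_antisymm ht1A.2 hge
  exact hkey t1 ht1pos hUt1 (fun y hy hyt => hUt1 ▸ (hmin y hy hyt).le)

/-- any solution of the delayed ODE `U' = -d(U) + b(U(·-r))` with
constant positive initial history `M` converges to the positive equilibrium `κ`. -/
theorem delayed_ode_tendsto_kappa (D : FisherData) (M : ℝ) (hM : 0 < M)
    (U : ℝ → ℝ)
    (hcont : ContinuousOn U (Set.Ici (-D.r)))
    (hinit : ∀ s ∈ Set.Icc (-D.r) 0, U s = M)
    (hode : ∀ t : ℝ, 0 < t → HasDerivAt U (-D.d (U t) + D.b (U (t - D.r))) t) :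
    Filter.Tendsto U Filter.atTop (nhds D.κ) := by
  have hdm := D.mono_d
  have hbm := D.mono_b
  have hrκ := D.hκ
  have hminpos : 0 < min M D.κ := lt_min hM D.hκ
  set c₁ := min M D.κ / 2 with hc₁def
  have hc₁pos : 0 < c₁ := by positivity
  have hc₁M : c₁ < M := by
    have := min_le_left M D.κ
    simp only [hc₁def]
    linarith
  have hc₁κ : c₁ < D.κ := by
    have := min_le_right M D.κ
    simp only [hc₁def]
    linarith
  -- lower bound
  have hlow : ∀ t, -D.r ≤ t → c₁ < U t := by
    apply low_bound_aux D.r D.hr U M c₁ hc₁M hcont hinit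
    intro t1 ht1pos hUt1 hmin
    have hder := hode t1 ht1pos
    have hnonpos : -D.d (U t1) + D.b (U (t1 - D.r)) ≤ 0 :=
      deriv_nonpos_of_left_ge hder (by linarith [D.hr] : -D.r < t1) hmin
    have h1 : U t1 ≤ U (t1 - D.r) := by
      rcases lt_or_eq_of_le (by linarith [D.hr] : t1 - D.r ≤ t1) with h | h
      · exact hmin _ (by linarith [ht1pos]) h
      · rw [h]
    rw [hUt1] at h1 hnonpos
    have h2 : D.b c₁ ≤ D.b (U (t1 - D.r)) :=
      hbm (le_of_lt hc₁pos) (le_trans hc₁pos.le h1) h1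
    have h3 := D.d_lt_b hc₁pos hc₁κ
    linarith
  set c₂ := max M D.κ + 1 with hc₂def
  have hMc₂ : M < c₂ := by
    have := le_max_left M D.κ
    simp only [hc₂def]
    linarith
  have hκc₂ : D.κ < c₂ := by
    have := le_max_right M D.κ
    simp only [hc₂def]
    linarith
  -- upper bound
  have hupp' : ∀ t, -D.r ≤ t → -c₂ < -U t := by
    apply low_bound_aux D.r D.hr (fun s => -U s) (-M) (-c₂) (by linarith) hcont.neg
      (fun s hs => by simp [hinit s hs])
    intro t1 ht1pos hUt1 hmin
    simp only [neg_inj] at hUt1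
    have hmax : ∀ y, -D.r ≤ y → y < t1 → U y ≤ U t1 := fun y hy hyt => by
      have := hmin y hy hyt
      simp only [neg_le_neg_iff] at this
      linarith
    have hder := (hode t1 ht1pos).neg
    have hnonpos : -(-D.d (U t1) + D.b (U (t1 - D.r))) ≤ 0 :=
      deriv_nonpos_of_left_ge hder (by linarith [D.hr] : -D.r < t1) hmin
    have h1 : U (t1 - D.r) ≤ U t1 := by
      rcases lt_or_eq_of_le (by linarith [D.hr] : t1 - D.r ≤ t1) with h | h
      · exact hmax _ (by linarith [ht1pos]) h
      · rw [h]
    rw [hUt1] at h1 hnonpos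
    have h0 : c₁ ≤ U (t1 - D.r) := (hlow _ (by linarith [ht1pos, D.hr])).le
    have h2 : D.b (U (t1 - D.r)) ≤ D.b c₂ :=
      hbm (le_trans hc₁pos.le h0) (le_trans (le_trans hc₁pos.le h0) h1) h1
    have h3 := D.b_lt_d hκc₂
    linarith
  have hupp : ∀ t, -D.r ≤ t → U t < c₂ := fun t ht => by linarith [hupp' t ht]
  -- limsup / liminf setup
  have hevl : ∀ᶠ t in atTop, c₁ ≤ U t := by
    filter_upwards [eventually_ge_atTop (0:ℝ)] with t ht
    exact (hlow t (by linarith [neg_nonpos.mpr D.hr])).le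
  have hevu : ∀ᶠ t in atTop, U t ≤ c₂ := by
    filter_upwards [eventually_ge_atTop (0:ℝ)] with t ht
    exact (hupp t (by linarith [neg_nonpos.mpr D.hr])).le
  have hbU : IsBoundedUnder (· ≤ ·) atTop U := isBoundedUnder_of_eventually_le hevu
  have hbL : IsBoundedUnder (· ≥ ·) atTop U := isBoundedUnder_of_eventually_ge hevl
  have hcbU : IsCoboundedUnder (· ≤ ·) atTop U := hbL.isCoboundedUnder_le
  have hcbL : IsCoboundedUnder (· ≥ ·) atTop U := hbU.isCoboundedUnder_ge
  set L := limsup U atTop with hLdef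
  set l := liminf U atTop with hldef
  have hlL : l ≤ L := liminf_le_limsup hbU hbL
  have hc₁l : c₁ ≤ l := le_liminf_of_le hcbL hevl
  have hLc₂ : L ≤ c₂ := limsup_le_of_le hcbU hevu
  have hlpos : 0 < l := lt_of_lt_of_le hc₁pos hc₁l
  have hLpos : 0 < L := lt_of_lt_of_le hlpos hlL
  -- convergence implies limit κ
  have hconv : ∀ L', 0 < L' → Tendsto U atTop (nhds L') → Tendsto U atTop (nhds D.κ) := by
    intro L' hL' htend
    have hmvt : ∀ n : ℕ, ∃ c, c ∈ Ioo ((n:ℝ)+1) ((n:ℝ)+2) ∧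
        -D.d (U c) + D.b (U (c - D.r)) = (U ((n:ℝ)+2) - U ((n:ℝ)+1)) / (((n:ℝ)+2) - ((n:ℝ)+1)) := by
      intro n
      have hn : (0:ℝ) ≤ n := n.cast_nonneg
      have h1 : ((n:ℝ)+1) < ((n:ℝ)+2) := by linarith
      obtain ⟨c, hc1, hc2⟩ := exists_hasDerivAt_eq_slope U
        (fun t => -D.d (U t) + D.b (U (t - D.r))) h1
        (hcont.mono (fun x hx => by
          simp only [mem_Icc] at hx
          simp only [mem_Ici]
          linarith [hx.1, neg_nonpos.mpr D.hr]))
        (fun x hx => hode x (by linarith [hx.1]))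
      exact ⟨c, hc1, hc2⟩
    choose ts hts1 hts2 using hmvt
    have htsTop : Tendsto ts atTop atTop := by
      apply tendsto_atTop_mono (fun n => (hts1 n).1.le)
      exact tendsto_atTop_add_const_right atTop 1 tendsto_natCast_atTop_atTop
    have hU1 : Tendsto (fun n => U (ts n)) atTop (nhds L') := htend.comp htsTop
    have hU2 : Tendsto (fun n => U (ts n - D.r)) atTop (nhds L') := by
      apply htend.comp
      simpa [sub_eq_add_neg] using tendsto_atTop_add_const_right atTop (-D.r) htsTop
    have hlhs : Tendsto (fun n => -D.d (U (ts n)) + D.b (U (ts n - D.r))) atTop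
        (nhds (-D.d L' + D.b L')) :=
      (((D.contAt_d hL').tendsto.comp hU1).neg).add ((D.contAt_b hL').tendsto.comp hU2)
    have hrhs : Tendsto (fun n : ℕ => (U ((n:ℝ)+2) - U ((n:ℝ)+1)) / (((n:ℝ)+2) - ((n:ℝ)+1)))
        atTop (nhds 0) := by
      have e1 : Tendsto (fun n : ℕ => U ((n:ℝ)+2)) atTop (nhds L') :=
        htend.comp (tendsto_atTop_add_const_right atTop 2 tendsto_natCast_atTop_atTop)
      have e2 : Tendsto (fun n : ℕ => U ((n:ℝ)+1)) atTop (nhds L') :=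
        htend.comp (tendsto_atTop_add_const_right atTop 1 tendsto_natCast_atTop_atTop)
      have heq : (fun n : ℕ => (U ((n:ℝ)+2) - U ((n:ℝ)+1)) / (((n:ℝ)+2) - ((n:ℝ)+1)))
          = fun n : ℕ => U ((n:ℝ)+2) - U ((n:ℝ)+1) := by
        funext n; norm_num
      rw [heq]
      simpa using e1.sub e2
    have h0 : -D.d L' + D.b L' = 0 :=
      tendsto_nhds_unique (hlhs.congr hts2) hrhs
    have hL'κ : L' = D.κ := by
      by_contra hne
      have hs := D.hsign L' hL' hne
      have : D.b L' - D.d L' = 0 := by linarith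
      rw [this, zero_mul] at hs
      exact lt_irrefl 0 hs
    exact hL'κ ▸ htend
  rcases eq_or_lt_of_le hlL with heqLl | hlt
  · exact hconv L hLpos (tendsto_of_liminf_eq_limsup (hldef.symm.trans heqLl) hLdef.symm hbU hbL)
  · exfalso
    have hε0 : 0 < (L - l)/4 := by linarith
    -- limsup side
    have key : ∀ δ, 0 < δ → δ < L → D.d (L - δ) ≤ D.b (L + δ) := by
      intro δ hδ hδL
      set ε := min δ ((L - l)/4) with hεdef
      have hεpos : 0 < ε := lt_min hδ hε0
      have hεδ : ε ≤ δ := min_le_left _ _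
      have hεl : ε ≤ (L - l)/4 := min_le_right _ _
      obtain ⟨T, hT⟩ := eventually_atTop.mp
        (eventually_lt_of_limsup_lt (by linarith : L < L + δ) hbU)
      have hfreq1 := frequently_atTop.mp
        (frequently_lt_of_liminf_lt hcbL (by linarith : l < l + (L-l)/4))
      have hfreq2 := frequently_atTop.mp
        (frequently_lt_of_lt_limsup hcbU (by linarith : L - ε < L))
      obtain ⟨τ₁, hτ₁ge, hτ₁⟩ := hfreq1 (max T 1 + D.r)
      obtain ⟨s, hsge, hs⟩ := hfreq2 τ₁
      obtain ⟨τ₂, hτ₂ge, hτ₂⟩ := hfreq1 s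
      have hτ₁pos : (0:ℝ) < τ₁ :=
        lt_of_lt_of_le (by linarith [le_max_right T 1, D.hr]) hτ₁ge
      have hτ₁₂ : τ₁ ≤ τ₂ := le_trans hsge hτ₂ge
      obtain ⟨t', ht'mem, ht'max⟩ := isCompact_Icc.exists_isMaxOn (nonempty_Icc.mpr hτ₁₂)
        (hcont.mono (fun x hx => le_trans (by linarith [neg_nonpos.mpr D.hr] : -D.r ≤ τ₁) hx.1))
      have hmax' : ∀ y ∈ Icc τ₁ τ₂, U y ≤ U t' := fun y hy => isMaxOn_iff.mp ht'max y hy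
      have hUt' : L - ε < U t' := lt_of_lt_of_le hs (hmax' s ⟨hsge, hτ₂ge⟩)
      have hLε : l + (L - l)/4 < L - ε := by linarith
      have ht'1 : τ₁ < t' := lt_of_le_of_ne ht'mem.1 (fun h => by rw [← h] at hUt'; linarith)
      have ht'2 : t' < τ₂ := lt_of_le_of_ne ht'mem.2 (fun h => by rw [h] at hUt'; linarith)
      have hloc : IsLocalMax U t' := by
        filter_upwards [isOpen_Ioo.mem_nhds (⟨ht'1, ht'2⟩ : t' ∈ Ioo τ₁ τ₂)] with y hy
        exact hmax' y (Ioo_subset_Icc_self hy)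
      have ht'pos : 0 < t' := lt_trans hτ₁pos ht'1
      have hzero := hloc.hasDerivAt_eq_zero (hode t' ht'pos)
      have htr : T ≤ t' - D.r := by
        have h1 : max T 1 + D.r ≤ t' := le_trans hτ₁ge ht'1.le
        have h2 := le_max_left T 1
        linarith
      have hU2 : U (t' - D.r) < L + δ := hT _ htr
      have hU2' : c₁ ≤ U (t' - D.r) := (hlow _ (by linarith [D.hr] : -D.r ≤ t' - D.r)).le
      have hd1 : D.d (L - δ) ≤ D.d (U t') := hdm (by linarith : (0:ℝ) ≤ L - δ)
        (le_trans hc₁pos.le (hlow t' (by linarith [neg_nonpos.mpr D.hr])).le) (by linarith)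
      have hb1 : D.b (U (t' - D.r)) ≤ D.b (L + δ) := hbm (le_trans hc₁pos.le hU2')
        (by linarith : (0:ℝ) ≤ L + δ) hU2.le
      linarith
    -- liminf side
    have key' : ∀ δ, 0 < δ → δ < l → D.b (l - δ) ≤ D.d (l + δ) := by
      intro δ hδ hδl
      set ε := min δ ((L - l)/4) with hεdef
      have hεpos : 0 < ε := lt_min hδ hε0
      have hεδ : ε ≤ δ := min_le_left _ _
      have hεl : ε ≤ (L - l)/4 := min_le_right _ _
      obtain ⟨T, hT⟩ := eventually_atTop.mp
        (eventually_lt_of_lt_liminf (by linarith : l - δ < l) hbL)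
      have hfreq1 := frequently_atTop.mp
        (frequently_lt_of_lt_limsup hcbU (by linarith : L - (L-l)/4 < L))
      have hfreq2 := frequently_atTop.mp
        (frequently_lt_of_liminf_lt hcbL (by linarith : l < l + ε))
      obtain ⟨τ₁, hτ₁ge, hτ₁⟩ := hfreq1 (max T 1 + D.r)
      obtain ⟨s, hsge, hs⟩ := hfreq2 τ₁
      obtain ⟨τ₂, hτ₂ge, hτ₂⟩ := hfreq1 s
      have hτ₁pos : (0:ℝ) < τ₁ :=
        lt_of_lt_of_le (by linarith [le_max_right T 1, D.hr]) hτ₁ge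
      have hτ₁₂ : τ₁ ≤ τ₂ := le_trans hsge hτ₂ge
      obtain ⟨t', ht'mem, ht'min⟩ := isCompact_Icc.exists_isMinOn (nonempty_Icc.mpr hτ₁₂)
        (hcont.mono (fun x hx => le_trans (by linarith [neg_nonpos.mpr D.hr] : -D.r ≤ τ₁) hx.1))
      have hmin' : ∀ y ∈ Icc τ₁ τ₂, U t' ≤ U y := fun y hy => isMinOn_iff.mp ht'min y hy
      have hUt' : U t' < l + ε := lt_of_le_of_lt (hmin' s ⟨hsge, hτ₂ge⟩) hs
      have hLε : l + ε < L - (L - l)/4 := by linarith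
      have ht'1 : τ₁ < t' := lt_of_le_of_ne ht'mem.1 (fun h => by rw [← h] at hUt'; linarith)
      have ht'2 : t' < τ₂ := lt_of_le_of_ne ht'mem.2 (fun h => by rw [h] at hUt'; linarith)
      have hloc : IsLocalMin U t' := by
        filter_upwards [isOpen_Ioo.mem_nhds (⟨ht'1, ht'2⟩ : t' ∈ Ioo τ₁ τ₂)] with y hy
        exact hmin' y (Ioo_subset_Icc_self hy)
      have ht'pos : 0 < t' := lt_trans hτ₁pos ht'1
      have hzero := hloc.hasDerivAt_eq_zero (hode t' ht'pos)
      have htr : T ≤ t' - D.r := by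
        have h1 : max T 1 + D.r ≤ t' := le_trans hτ₁ge ht'1.le
        have h2 := le_max_left T 1
        linarith
      have hU2 : l - δ < U (t' - D.r) := hT _ htr
      have hU2' : U (t' - D.r) ≤ c₂ := (hupp _ (by linarith [D.hr] : -D.r ≤ t' - D.r)).le
      have hd1 : D.d (U t') ≤ D.d (l + δ) :=
        hdm (le_trans hc₁pos.le (hlow t' (by linarith [neg_nonpos.mpr D.hr])).le)
          (by linarith : (0:ℝ) ≤ l + δ) (by linarith)
      have hb1 : D.b (l - δ) ≤ D.b (U (t' - D.r)) := hbm (by linarith : (0:ℝ) ≤ l - δ)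
        (le_trans (by linarith : (0:ℝ) ≤ l - δ) hU2.le) hU2.le
      linarith
    -- pass to the limit δ → 0 on the limsup side
    have hdiv : ∀ x : ℝ, Tendsto (fun n : ℕ => x / ((n:ℝ)+2)) atTop (nhds 0) := by
      intro x
      have := (tendsto_const_div_atTop_nhds_zero_nat x).comp (tendsto_add_atTop_nat 2)
      apply this.congr
      intro n
      simp only [Function.comp_apply]
      push_cast
      ring
    have hdLbL : D.d L ≤ D.b L := by
      have h0 := hdiv (min L 1)
      have hmono : Tendsto (fun n : ℕ => L - min L 1 / ((n:ℝ)+2)) atTop (nhds L) := by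
        simpa using (tendsto_const_nhds (x := L) (f := atTop)).sub h0
      have hpl : Tendsto (fun n : ℕ => L + min L 1 / ((n:ℝ)+2)) atTop (nhds L) := by
        simpa using (tendsto_const_nhds (x := L) (f := atTop)).add h0
      have hdlim : Tendsto (fun n : ℕ => D.d (L - min L 1 / ((n:ℝ)+2))) atTop (nhds (D.d L)) :=
        (D.contAt_d hLpos).tendsto.comp hmono
      have hblim : Tendsto (fun n : ℕ => D.b (L + min L 1 / ((n:ℝ)+2))) atTop (nhds (D.b L)) :=
        (D.contAt_b hLpos).tendsto.comp hpl
      apply le_of_tendsto_of_tendsto' hdlim hblim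
      intro n
      have hmp : 0 < min L 1 := lt_min hLpos one_pos
      have hn2 : (2:ℝ) ≤ (n:ℝ) + 2 := by linarith [Nat.cast_nonneg (α := ℝ) n]
      have h1 : 0 < min L 1 / ((n:ℝ)+2) := by positivity
      have h2 : min L 1 / ((n:ℝ)+2) < L := by
        have hle : min L 1 / ((n:ℝ)+2) ≤ min L 1 / 2 := by
          apply div_le_div_of_nonneg_left hmp.le two_pos hn2
        have := min_le_left L 1
        linarith
      exact key _ h1 h2
    have hblb : D.b l ≤ D.d l := by
      have h0 := hdiv (min l 1)
      have hmono : Tendsto (fun n : ℕ => l - min l 1 / ((n:ℝ)+2)) atTop (nhds l) := by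
        simpa using (tendsto_const_nhds (x := l) (f := atTop)).sub h0
      have hpl : Tendsto (fun n : ℕ => l + min l 1 / ((n:ℝ)+2)) atTop (nhds l) := by
        simpa using (tendsto_const_nhds (x := l) (f := atTop)).add h0
      have hblim : Tendsto (fun n : ℕ => D.b (l - min l 1 / ((n:ℝ)+2))) atTop (nhds (D.b l)) :=
        (D.contAt_b hlpos).tendsto.comp hmono
      have hdlim : Tendsto (fun n : ℕ => D.d (l + min l 1 / ((n:ℝ)+2))) atTop (nhds (D.d l)) :=
        (D.contAt_d hlpos).tendsto.comp hpl
      apply le_of_tendsto_of_tendsto' hblim hdlim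
      intro n
      have hmp : 0 < min l 1 := lt_min hlpos one_pos
      have hn2 : (2:ℝ) ≤ (n:ℝ) + 2 := by linarith [Nat.cast_nonneg (α := ℝ) n]
      have h1 : 0 < min l 1 / ((n:ℝ)+2) := by positivity
      have h2 : min l 1 / ((n:ℝ)+2) < l := by
        have hle : min l 1 / ((n:ℝ)+2) ≤ min l 1 / 2 := by
          apply div_le_div_of_nonneg_left hmp.le two_pos hn2
        have := min_le_left l 1
        linarith
      exact key' _ h1 h2
    have hLκ : L ≤ D.κ := by
      by_contra h
      push_neg at h
      linarith [D.b_lt_d h]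
    have hκl : D.κ ≤ l := by
      by_contra h
      push_neg at h
      linarith [D.d_lt_b hlpos h]
    linarith
end

section
/- Let κ̂ > 0, r > 0 and ε₀ ∈ (0, κ̂]. Let b, D : [0, ∞) → ℝ be C¹ nondecreasing functions with b(0) = D(0) = 0, b'(0) > D'(0) ≥ 0, and b(s) > D(s) for all s ∈ (0, κ̂]. Suppose g : [−r, ∞) → ℝ is continuous and positive with g(s) = ε₀ for all s ∈ [−r, 0], g is differentiable on (0, ∞), and g'(t) = inf_{λ∈(0,1)} ( b(λ·g(t − r)) − D(λ·g(t)) )/λ for all t > 0. Then g is strictly increasing on [0, ∞), and there exists t̂ > 0 such that g(t) > κ̂ for all t ≥ t̂. -/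
open Real Filter Set

lemma slope_cont (f : ℝ → ℝ) (hf : ContDiffOn ℝ 1 f (Set.Ici 0)) (hf0 : f 0 = 0) :
    Continuous (fun x => if x ≤ 0 then derivWithin f (Set.Ici 0) 0 else f x / x) := by
  set c := derivWithin f (Set.Ici 0) 0
  rw [continuous_iff_continuousAt]
  intro x
  rcases lt_trichotomy x 0 with hx | hx | hx
  · have : (fun y => if y ≤ 0 then c else f y / y) =ᶠ[nhds x] (fun _ => c) := by
      filter_upwards [Iio_mem_nhds hx] with y hy
      simp [le_of_lt (mem_Iio.mp hy)]
    exact ContinuousAt.congr continuousAt_const this.symm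
  · subst hx
    have hd : HasDerivWithinAt f c (Set.Ici 0) 0 :=
      (hf.differentiableOn one_ne_zero 0 (by simp)).hasDerivWithinAt
    have hslope : Filter.Tendsto (slope f 0) (nhdsWithin 0 (Set.Ici 0 \ {0})) (nhds c) :=
      hasDerivWithinAt_iff_tendsto_slope.mp hd
    have hIoi : (Set.Ici (0:ℝ)) \ {0} = Set.Ioi 0 := by
      ext y; simp [lt_iff_le_and_ne, eq_comm, and_comm]
    rw [hIoi] at hslope
    have h1 : Filter.Tendsto (fun y => if y ≤ 0 then c else f y / y)
        (nhdsWithin 0 (Set.Ioi 0)) (nhds c) := by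
      refine hslope.congr' ?_
      filter_upwards [self_mem_nhdsWithin] with y hy
      have : ¬ (y ≤ 0) := not_le.mpr hy
      simp only [this, if_false, slope_def_field, hf0]
      rw [sub_zero, sub_zero]
    have h2 : Filter.Tendsto (fun y => if y ≤ 0 then c else f y / y)
        (nhdsWithin 0 (Set.Iic 0)) (nhds c) := by
      refine Filter.Tendsto.congr' ?_ tendsto_const_nhds
      filter_upwards [self_mem_nhdsWithin] with y hy
      simp [mem_Iic.mp hy]
    have : ContinuousAt (fun y => if y ≤ 0 then c else f y / y) 0 := by
      unfold ContinuousAt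
      rw [← nhdsLE_sup_nhdsGT (0:ℝ)]
      simp only [if_pos le_rfl]
      exact Filter.Tendsto.sup h2 h1
    exact this
  · have hcf : ContinuousAt f x := by
      have := hf.continuousOn
      exact this.continuousAt (Ici_mem_nhds (by linarith) : Set.Ici (0:ℝ) ∈ nhds x)
    have : (fun y => if y ≤ 0 then c else f y / y) =ᶠ[nhds x] (fun y => f y / y) := by
      filter_upwards [Ioi_mem_nhds hx] with y hy
      simp [not_le.mpr (mem_Ioi.mp hy)]
    exact ContinuousAt.congr ((hcf.div continuousAt_id (ne_of_gt hx))) this.symm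

lemma inf_Ioo_eq (φ : ℝ → ℝ) (hφ : Continuous φ) :
    ∃ l ∈ Set.Icc (0:ℝ) 1, sInf (φ '' Set.Ioo 0 1) = φ l ∧
      ∀ m ∈ Set.Icc (0:ℝ) 1, φ l ≤ φ m := by
  obtain ⟨l, hl, hmin⟩ := isCompact_Icc.exists_isMinOn (Set.nonempty_Icc.mpr zero_le_one)
    hφ.continuousOn
  refine ⟨l, hl, ?_, fun m hm => hmin hm⟩
  have hne : (φ '' Set.Ioo 0 1).Nonempty := by
    exact ⟨φ (1/2), ⟨1/2, by norm_num, rfl⟩⟩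
  have hbdd : BddBelow (φ '' Set.Ioo 0 1) := by
    refine ⟨φ l, ?_⟩
    rintro y ⟨m, hm, rfl⟩
    exact hmin (Set.Ioo_subset_Icc_self hm)
  have h1 : φ l ≤ sInf (φ '' Set.Ioo 0 1) := by
    apply le_csInf hne
    rintro y ⟨m, hm, rfl⟩
    exact hmin (Set.Ioo_subset_Icc_self hm)
  have h2 : sInf (φ '' Set.Ioo 0 1) ≤ φ l := by
    have hcl : φ l ∈ closure (φ '' Set.Ioo 0 1) := by
      have : l ∈ closure (Set.Ioo (0:ℝ) 1) := by
        rw [closure_Ioo one_ne_zero.symm]; exact hl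
      exact (hφ.continuousOn.image_closure (s := Set.Ioo 0 1))
        (Set.mem_image_of_mem φ this)
    by_contra h
    push_neg at h
    obtain ⟨y, hy, hlt⟩ := (Metric.mem_closure_iff.mp hcl) (sInf (φ '' Set.Ioo 0 1) - φ l)
      (by linarith)
    have := csInf_le hbdd hy
    have := abs_lt.mp (by simpa [Real.dist_eq] using hlt)
    linarith [this.1, this.2]
  exact le_antisymm h2 h1

lemma deriv_bound_exists (f : ℝ → ℝ) (hf : ContDiffOn ℝ 1 f (Set.Ici 0)) (V : ℝ) (hV : 0 ≤ V) :
    ∃ K, ∀ x ∈ Set.Icc (0:ℝ) V, derivWithin f (Set.Ici 0) x ≤ K := by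
  have hcont : ContinuousOn (derivWithin f (Set.Ici 0)) (Set.Ici 0) :=
    hf.continuousOn_derivWithin (uniqueDiffOn_Ici 0) le_rfl
  obtain ⟨l, hl, hmax⟩ := isCompact_Icc.exists_isMaxOn (Set.nonempty_Icc.mpr hV)
    (hcont.mono (fun x hx => hx.1))
  exact ⟨derivWithin f (Set.Ici 0) l, fun x hx => hmax hx⟩

lemma onesided_lip (f : ℝ → ℝ) (hf : ContDiffOn ℝ 1 f (Set.Ici 0)) (V K : ℝ)
    (hK : ∀ x ∈ Set.Icc (0:ℝ) V, derivWithin f (Set.Ici 0) x ≤ K) :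
    ∀ x y : ℝ, 0 ≤ x → x ≤ y → y ≤ V → f y - f x ≤ K * (y - x) := by
  intro x y hx hxy hyV
  have hmono : MonotoneOn (fun z => K * z - f z) (Set.Icc 0 V) := by
    have hdiff : ∀ z ∈ Set.Ioo (0:ℝ) V, DifferentiableAt ℝ f z := by
      intro z hz
      have : Set.Ici (0:ℝ) ∈ nhds z := Ici_mem_nhds hz.1
      exact ((hf.contDiffAt this).differentiableAt one_ne_zero)
    apply monotoneOn_of_deriv_nonneg (convex_Icc 0 V)
    · exact (continuous_const.mul continuous_id).continuousOn.sub
        (hf.continuousOn.mono (fun z hz => hz.1))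
    · rw [interior_Icc]
      intro z hz
      exact (((differentiableAt_const K).mul differentiableAt_id).sub
        (hdiff z hz)).differentiableWithinAt
    · rw [interior_Icc]
      intro z hz
      have h1 : HasDerivAt (fun z => K * z - f z) (K * 1 - deriv f z) z :=
        (((hasDerivAt_id z).const_mul K)).sub (hdiff z hz).hasDerivAt
      rw [h1.deriv, mul_one]
      have : deriv f z = derivWithin f (Set.Ici 0) z := by
        rw [derivWithin_of_mem_nhds (Ici_mem_nhds hz.1)]
      rw [this]
      have := hK z (Set.Ioo_subset_Icc_self hz)
      linarith
  have := hmono (Set.mem_Icc.mpr ⟨hx, le_trans hxy hyV⟩)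
    (Set.mem_Icc.mpr ⟨le_trans hx hxy, hyV⟩) hxy
  simp only at this
  linarith

set_option maxHeartbeats 3200000 in
/-- the comparison delayed ODE -/
theorem comparison_delayed_ode (κhat r ε₀ : ℝ) (hκ : 0 < κhat) (hr : 0 < r)
    (hε : ε₀ ∈ Set.Ioc 0 κhat)
    (b Dd : ℝ → ℝ)
    (hbC1 : ContDiffOn ℝ 1 b (Set.Ici 0)) (hDC1 : ContDiffOn ℝ 1 Dd (Set.Ici 0))
    (hbmono : MonotoneOn b (Set.Ici 0)) (hDmono : MonotoneOn Dd (Set.Ici 0))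
    (hb0 : b 0 = 0) (hD0 : Dd 0 = 0)
    (hderiv : derivWithin Dd (Set.Ici 0) 0 < derivWithin b (Set.Ici 0) 0)
    (hD0' : 0 ≤ derivWithin Dd (Set.Ici 0) 0)
    (hgt : ∀ s ∈ Set.Ioc 0 κhat, Dd s < b s)
    (g : ℝ → ℝ)
    (hgcont : ContinuousOn g (Set.Ici (-r)))
    (hgpos : ∀ t ∈ Set.Ici (-r), 0 < g t)
    (hginit : ∀ s ∈ Set.Icc (-r) 0, g s = ε₀)
    (hgode : ∀ t : ℝ, 0 < t → HasDerivAt g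
      (sInf ((fun l : ℝ => (b (l * g (t - r)) - Dd (l * g t)) / l) '' Set.Ioo 0 1)) t) :
    StrictMonoOn g (Set.Ici 0) ∧ ∃ T : ℝ, 0 < T ∧ ∀ t ≥ T, κhat < g t := by
  obtain ⟨hε0, hεκ⟩ := hε
  set d0b := derivWithin b (Set.Ici 0) 0 with hd0b_def
  set d0D := derivWithin Dd (Set.Ici 0) 0 with hd0D_def
  set sb : ℝ → ℝ := fun x => if x ≤ 0 then d0b else b x / x with hsb_def
  set sD : ℝ → ℝ := fun x => if x ≤ 0 then d0D else Dd x / x with hsD_def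
  have hsbc : Continuous sb := slope_cont b hbC1 hb0
  have hsDc : Continuous sD := slope_cont Dd hDC1 hD0
  set Hm : ℝ → ℝ → ℝ → ℝ := fun u v l => u * sb (l * u) - v * sD (l * v) with hHm_def
  have hHmc : ∀ u v, Continuous (Hm u v) := by
    intro u v
    exact (continuous_const.mul (hsbc.comp (continuous_id.mul continuous_const))).sub
      (continuous_const.mul (hsDc.comp (continuous_id.mul continuous_const)))
  set img : ℝ → ℝ → Set ℝ :=
    fun u v => (fun l : ℝ => (b (l * u) - Dd (l * v)) / l) '' Set.Ioo 0 1 with himg_def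
  -- pointwise identification on Ioo
  have hHval : ∀ u v l : ℝ, 0 < u → 0 < v → 0 < l →
      Hm u v l = (b (l * u) - Dd (l * v)) / l := by
    intro u v l hu hv hl
    have h1 : sb (l * u) = b (l * u) / (l * u) := by
      rw [hsb_def]; simp [not_le.mpr (mul_pos hl hu)]
    have h2 : sD (l * v) = Dd (l * v) / (l * v) := by
      rw [hsD_def]; simp [not_le.mpr (mul_pos hl hv)]
    rw [hHm_def]
    simp only [h1, h2]
    field_simp
  have himg_eq : ∀ u v : ℝ, 0 < u → 0 < v → img u v = Hm u v '' Set.Ioo 0 1 := by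
    intro u v hu hv
    rw [himg_def]
    apply Set.image_congr
    intro l hl
    exact (hHval u v l hu hv hl.1).symm
  -- min characterization
  have hmin : ∀ u v : ℝ, 0 < u → 0 < v → ∃ l ∈ Set.Icc (0:ℝ) 1,
      sInf (img u v) = Hm u v l ∧ ∀ m ∈ Set.Icc (0:ℝ) 1, Hm u v l ≤ Hm u v m := by
    intro u v hu hv
    obtain ⟨l, hl, heq, hminl⟩ := inf_Ioo_eq (Hm u v) (hHmc u v)
    refine ⟨l, hl, ?_, hminl⟩
    rw [himg_eq u v hu hv]; exact heq
  have himg_ne : ∀ u v : ℝ, (img u v).Nonempty := by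
    intro u v; exact ⟨_, ⟨1/2, by norm_num, rfl⟩⟩
  have hbddB : ∀ u v : ℝ, 0 < u → 0 < v → BddBelow (img u v) := by
    intro u v hu hv
    obtain ⟨l, hl, heq, hminl⟩ := hmin u v hu hv
    refine ⟨Hm u v l, ?_⟩
    rw [himg_eq u v hu hv]
    rintro y ⟨m, hm, rfl⟩
    exact hminl m (Set.Ioo_subset_Icc_self hm)
  -- monotone comparison of infima
  have hcomp : ∀ u₁ v₁ u₂ v₂ : ℝ, 0 < u₁ → 0 < v₂ → u₁ ≤ u₂ → v₂ ≤ v₁ →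
      sInf (img u₁ v₁) ≤ sInf (img u₂ v₂) := by
    intro u₁ v₁ u₂ v₂ hu₁ hv₂ hu hv
    apply le_csInf (himg_ne u₂ v₂)
    rintro y ⟨l, hl, rfl⟩
    have hpt : (b (l * u₁) - Dd (l * v₁)) / l ≤ (b (l * u₂) - Dd (l * v₂)) / l := by
      have h1 : b (l * u₁) ≤ b (l * u₂) :=
        hbmono (Set.mem_Ici.mpr (mul_nonneg hl.1.le hu₁.le))
          (Set.mem_Ici.mpr (mul_nonneg hl.1.le (hu₁.le.trans hu)))
          (mul_le_mul_of_nonneg_left hu hl.1.le)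
      have h2 : Dd (l * v₂) ≤ Dd (l * v₁) :=
        hDmono (Set.mem_Ici.mpr (mul_nonneg hl.1.le hv₂.le))
          (Set.mem_Ici.mpr (mul_nonneg hl.1.le (hv₂.le.trans hv)))
          (mul_le_mul_of_nonneg_left hv hl.1.le)
      exact (div_le_div_iff_of_pos_right hl.1).mpr (by linarith)
    calc sInf (img u₁ v₁) ≤ (b (l * u₁) - Dd (l * v₁)) / l :=
          csInf_le (hbddB u₁ v₁ hu₁ (lt_of_lt_of_le hv₂ hv)) ⟨l, hl, rfl⟩
      _ ≤ _ := hpt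
  -- positivity at equal arguments ≤ κhat
  have hpos : ∀ a : ℝ, 0 < a → a ≤ κhat → 0 < sInf (img a a) := by
    intro a ha haκ
    obtain ⟨l, hl, heq, hminl⟩ := hmin a a ha ha
    rw [heq]
    rcases eq_or_lt_of_le hl.1 with h0 | h0
    · rw [hHm_def, ← h0]
      simp only [zero_mul]
      have hsb0 : sb 0 = d0b := by simp [hsb_def]
      have hsD0 : sD 0 = d0D := by simp [hsD_def]
      rw [hsb0, hsD0]
      nlinarith
    · rw [hHval a a l ha ha h0]
      apply div_pos ?_ h0
      have hmem : l * a ∈ Set.Ioc (0:ℝ) κhat := by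
        constructor
        · exact mul_pos h0 ha
        · calc l * a ≤ 1 * a := by
                apply mul_le_mul_of_nonneg_right hl.2 ha.le
          _ = a := one_mul a
          _ ≤ κhat := haκ
      linarith [hgt (l * a) hmem]
  -- the extended g and the continuous inf function F
  set gh : ℝ → ℝ := fun t => g (max t (-r)) with hgh_def
  have hghc : Continuous gh := by
    apply hgcont.comp_continuous (continuous_id.max continuous_const)
    intro x; exact Set.mem_Ici.mpr (le_max_right _ _)
  have hgh_eq : ∀ t : ℝ, -r ≤ t → gh t = g t := by
    intro t ht; rw [hgh_def]; simp [max_eq_left ht]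
  set F : ℝ → ℝ := fun t => sInf ((fun l => Hm (gh (t - r)) (gh t) l) '' Set.Icc 0 1)
    with hF_def
  have hFc : Continuous F := by
    apply IsCompact.continuous_sInf isCompact_Icc
    rw [hHm_def]
    apply Continuous.sub
    · exact ((hghc.comp (continuous_fst.sub continuous_const)).mul
        (hsbc.comp (continuous_snd.mul (hghc.comp (continuous_fst.sub continuous_const)))))
    · exact (hghc.comp continuous_fst).mul
        (hsDc.comp (continuous_snd.mul (hghc.comp continuous_fst)))
  have hFeq : ∀ t : ℝ, 0 ≤ t → sInf (img (g (t - r)) (g t)) = F t := by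
    intro t ht
    have h1 : gh (t - r) = g (t - r) := hgh_eq _ (by linarith)
    have h2 : gh t = g t := hgh_eq _ (by linarith)
    have hu : 0 < g (t - r) := hgpos _ (Set.mem_Ici.mpr (by linarith))
    have hv : 0 < g t := hgpos _ (Set.mem_Ici.mpr (by linarith))
    obtain ⟨l, hl, heq, hminl⟩ := hmin _ _ hu hv
    rw [heq, hF_def]
    simp only [h1, h2]
    symm
    apply IsLeast.csInf_eq
    exact ⟨⟨l, hl, rfl⟩, by rintro y ⟨m, hm, rfl⟩; exact hminl m hm⟩
  have hode' : ∀ t : ℝ, 0 < t → HasDerivAt g (F t) t := by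
    intro t ht
    have := hgode t ht
    rwa [show ((fun l : ℝ => (b (l * g (t - r)) - Dd (l * g t)) / l) '' Set.Ioo 0 1)
        = img (g (t - r)) (g t) from rfl, hFeq t ht.le] at this
  -- monotonicity of g on [-r, T] given F nonneg on (0, T)
  have hmono_seg : ∀ T : ℝ, 0 ≤ T → (∀ s : ℝ, 0 < s → s < T → 0 ≤ F s) →
      MonotoneOn g (Set.Icc (-r) T) := by
    intro T hT hFpos
    have hm0T : MonotoneOn g (Set.Icc 0 T) := by
      apply monotoneOn_of_deriv_nonneg (convex_Icc 0 T)
      · exact hgcont.mono (fun x hx => Set.mem_Ici.mpr (by linarith [hx.1]))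
      · rw [interior_Icc]
        intro x hx
        exact (hode' x hx.1).differentiableAt.differentiableWithinAt
      · rw [interior_Icc]
        intro x hx
        rw [(hode' x hx.1).deriv]
        exact hFpos x hx.1 hx.2
    intro x hx y hy hxy
    rcases le_or_gt y 0 with hy0 | hy0
    · rw [hginit x ⟨hx.1, le_trans hxy hy0⟩, hginit y ⟨hy.1, hy0⟩]
    · rcases le_or_gt x 0 with hx0 | hx0
      · rw [hginit x ⟨hx.1, hx0⟩, ← hginit 0 ⟨by linarith, le_rfl⟩]
        exact hm0T ⟨le_rfl, hT⟩ ⟨hy0.le, hy.2⟩ hy0.le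
      · exact hm0T ⟨hx0.le, hx.2⟩ ⟨hy0.le, hy.2⟩ hxy
  -- positivity of F at 0
  have hF0 : 0 < F 0 := by
    rw [← hFeq 0 le_rfl]
    have h1 : g (0 - r) = ε₀ := by
      rw [zero_sub]; exact hginit (-r) ⟨le_rfl, by linarith⟩
    have h2 : g 0 = ε₀ := hginit 0 ⟨by linarith, le_rfl⟩
    rw [h1, h2]
    exact hpos ε₀ hε0 hεκ
  -- Step 1: F is nonnegative on (0, ∞)
  have hFnonneg : ∀ t : ℝ, 0 < t → 0 ≤ F t := by
    by_contra hcon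
    push_neg at hcon
    obtain ⟨t₁, ht₁pos, hFt₁⟩ := hcon
    set S := {t : ℝ | 0 < t ∧ F t < 0} with hS_def
    have hSne : S.Nonempty := ⟨t₁, ht₁pos, hFt₁⟩
    have hSbdd : BddBelow S := ⟨0, fun t ht => ht.1.le⟩
    set ts := sInf S with hts_def
    have hts0 : 0 ≤ ts := le_csInf hSne (fun t ht => ht.1.le)
    have htscl : ts ∈ closure S := csInf_mem_closure hSne hSbdd
    have h1 : F ts ≤ 0 := by
      have hsub : closure S ⊆ {t : ℝ | F t ≤ 0} := by
        apply closure_minimal ?_ (isClosed_le hFc continuous_const)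
        intro t ht; exact ht.2.le
      exact hsub htscl
    have htspos : 0 < ts := by
      rcases eq_or_lt_of_le hts0 with h | h
      · exfalso; rw [← h] at h1; linarith
      · exact h
    have hFge : ∀ s : ℝ, 0 < s → s < ts → 0 ≤ F s := by
      intro s hs hslt
      by_contra hneg
      push_neg at hneg
      exact absurd (csInf_le hSbdd ⟨hs, hneg⟩) (not_le.mpr hslt)
    have h2 : 0 ≤ F ts := by
      have hcl2 : ts ∈ closure (Set.Ioo 0 ts) := by
        rw [closure_Ioo (ne_of_lt htspos)]
        exact ⟨hts0, le_rfl⟩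
      have hsub : closure (Set.Ioo 0 ts) ⊆ {t : ℝ | 0 ≤ F t} := by
        apply closure_minimal ?_ (isClosed_le continuous_const hFc)
        intro s hs; exact hFge s hs.1 hs.2
      exact hsub hcl2
    have hmono1 : MonotoneOn g (Set.Icc (-r) ts) := hmono_seg ts hts0 hFge
    obtain ⟨t₂, ht₂S, ht₂lt⟩ : ∃ t₂ ∈ S, t₂ < ts + r :=
      exists_lt_of_csInf_lt hSne (by linarith)
    have hts_le : ts ≤ t₂ := csInf_le hSbdd ht₂S
    set A := {s : ℝ | s ∈ Set.Icc ts t₂ ∧ 0 ≤ F s} with hA_def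
    have hAne : A.Nonempty := ⟨ts, ⟨le_rfl, hts_le⟩, h2⟩
    have hAclosed : IsClosed A := by
      have : A = Set.Icc ts t₂ ∩ {s : ℝ | 0 ≤ F s} := rfl
      rw [this]
      exact isClosed_Icc.inter (isClosed_le continuous_const hFc)
    have hAbdd : BddAbove A := ⟨t₂, fun s hs => hs.1.2⟩
    set ss := sSup A with hss_def
    have hssA : ss ∈ A := hAclosed.csSup_mem hAne hAbdd
    have hss_lt : ss < t₂ := by
      rcases eq_or_lt_of_le hssA.1.2 with h | h
      · exfalso; rw [h] at hssA; exact absurd hssA.2 (not_le.mpr ht₂S.2)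
      · exact h
    have hneg2 : ∀ x : ℝ, ss < x → x ≤ t₂ → F x < 0 := by
      intro x hx1 hx2
      by_contra hnn
      push_neg at hnn
      have : x ∈ A := ⟨⟨le_trans hssA.1.1 hx1.le, hx2⟩, hnn⟩
      exact absurd (le_csSup hAbdd this) (not_le.mpr hx1)
    have hsspos : 0 < ss := lt_of_lt_of_le htspos hssA.1.1
    have hanti : AntitoneOn g (Set.Icc ss t₂) := by
      apply antitoneOn_of_deriv_nonpos (convex_Icc ss t₂)
      · exact hgcont.mono (fun x hx => Set.mem_Ici.mpr (by linarith [hx.1]))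
      · rw [interior_Icc]
        intro x hx
        exact (hode' x (lt_trans hsspos hx.1)).differentiableAt.differentiableWithinAt
      · rw [interior_Icc]
        intro x hx
        rw [(hode' x (lt_trans hsspos hx.1)).deriv]
        exact (hneg2 x hx.1 hx.2.le).le
    have hg2 : g t₂ ≤ g ss := hanti ⟨le_rfl, hss_lt.le⟩ ⟨hss_lt.le, le_rfl⟩ hss_lt.le
    have hg1 : g (ss - r) ≤ g (t₂ - r) := by
      apply hmono1 ⟨by linarith, by linarith⟩ ⟨by linarith, by linarith⟩
      linarith
    have hposs : 0 < g (ss - r) := hgpos _ (Set.mem_Ici.mpr (by linarith))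
    have hpost : 0 < g t₂ := hgpos _ (Set.mem_Ici.mpr (by linarith [ht₂S.1]))
    have hfinal := hcomp (g (ss - r)) (g ss) (g (t₂ - r)) (g t₂) hposs hpost hg1 hg2
    rw [hFeq ss hsspos.le, hFeq t₂ ht₂S.1.le] at hfinal
    linarith [hssA.2, ht₂S.2]
  -- global monotonicity
  have hgmono : MonotoneOn g (Set.Ici (-r)) := by
    intro x hx y hy hxy
    have hT : 0 ≤ max y 0 := le_max_right _ _
    have := hmono_seg (max y 0) hT (fun s hs _ => hFnonneg s hs)
    exact this ⟨hx, le_trans hxy (le_max_left _ _)⟩ ⟨hy, le_max_left _ _⟩ hxy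
  -- Step 2: F is strictly positive on (0, ∞)
  have hFpos : ∀ t : ℝ, 0 < t → 0 < F t := by
    intro t₀ ht₀
    rcases lt_or_ge 0 (F t₀) with h | h
    · exact h
    have hFt₀ : F t₀ = 0 := le_antisymm h (hFnonneg t₀ ht₀)
    exfalso
    set v₀ := g t₀ with hv₀_def
    have hv₀pos : 0 < v₀ := hgpos _ (Set.mem_Ici.mpr (by linarith))
    have hg0 : g 0 = ε₀ := hginit 0 ⟨by linarith, le_rfl⟩
    have hεv₀ : ε₀ ≤ v₀ := by
      rw [← hg0]
      exact hgmono (Set.mem_Ici.mpr (by linarith)) (Set.mem_Ici.mpr (by linarith)) ht₀.le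
    obtain ⟨K, hK⟩ := deriv_bound_exists Dd hDC1 v₀ hv₀pos.le
    have hlip := onesided_lip Dd hDC1 v₀ K hK
    have hd0DK : d0D ≤ K := hK 0 ⟨le_rfl, hv₀pos.le⟩
    have hKnn : 0 ≤ K := le_trans hD0' hd0DK
    set u₀ := g (t₀ - r) with hu₀_def
    have hu₀pos : 0 < u₀ := hgpos _ (Set.mem_Ici.mpr (by linarith))
    -- key differential inequality
    have hkey : ∀ t : ℝ, 0 < t → t ≤ t₀ → F t ≤ K * (v₀ - g t) := by
      intro t ht htt₀
      have hut : 0 < g (t - r) := hgpos _ (Set.mem_Ici.mpr (by linarith))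
      have hvt : 0 < g t := hgpos _ (Set.mem_Ici.mpr (by linarith))
      have huu : g (t - r) ≤ u₀ :=
        hgmono (Set.mem_Ici.mpr (by linarith)) (Set.mem_Ici.mpr (by linarith)) (by linarith)
      have hvv : g t ≤ v₀ :=
        hgmono (Set.mem_Ici.mpr (by linarith)) (Set.mem_Ici.mpr (by linarith)) htt₀
      have hstep1 : sInf (img (g (t - r)) (g t)) ≤ sInf (img u₀ (g t)) :=
        hcomp _ _ _ _ hut hvt huu le_rfl
      have hstep2 : sInf (img u₀ (g t)) ≤ sInf (img u₀ v₀) + K * (v₀ - g t) := by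
        obtain ⟨l, hl, heq0, hminl0⟩ := hmin u₀ v₀ hu₀pos hv₀pos
        obtain ⟨l', hl', heq', hminl'⟩ := hmin u₀ (g t) hu₀pos hvt
        rw [heq', heq0]
        have hstep2a : Hm u₀ (g t) l' ≤ Hm u₀ (g t) l := hminl' l hl
        have hstep2b : Hm u₀ (g t) l ≤ Hm u₀ v₀ l + K * (v₀ - g t) := by
          rcases eq_or_lt_of_le hl.1 with h0 | h0
          · rw [hHm_def]
            simp only [← h0, zero_mul]
            have hsD0 : sD 0 = d0D := by simp [hsD_def]
            rw [hsD0]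
            nlinarith [hd0DK, sub_nonneg.mpr hvv]
          · rw [hHval u₀ (g t) l hu₀pos hvt h0, hHval u₀ v₀ l hu₀pos hv₀pos h0]
            have hDle : Dd (l * v₀) - Dd (l * g t) ≤ K * (l * v₀ - l * g t) := by
              apply hlip (l * g t) (l * v₀) (mul_nonneg h0.le hvt.le)
                (mul_le_mul_of_nonneg_left hvv h0.le)
              calc l * v₀ ≤ 1 * v₀ := mul_le_mul_of_nonneg_right hl.2 hv₀pos.le
                _ = v₀ := one_mul v₀
            have hgoal : (b (l * u₀) - Dd (l * g t)) / l
                - (b (l * u₀) - Dd (l * v₀)) / l ≤ K * (v₀ - g t) := by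
              rw [div_sub_div_same, div_le_iff₀ h0]
              calc b (l * u₀) - Dd (l * g t) - (b (l * u₀) - Dd (l * v₀))
                  = Dd (l * v₀) - Dd (l * g t) := by ring
                _ ≤ K * (l * v₀ - l * g t) := hDle
                _ = K * (v₀ - g t) * l := by ring
            linarith
        linarith
      have heqv : sInf (img u₀ v₀) = F t₀ := hFeq t₀ ht₀.le
      have heqt : sInf (img (g (t - r)) (g t)) = F t := hFeq t ht.le
      rw [heqt] at hstep1
      rw [heqv, hFt₀] at hstep2
      linarith
    -- Gronwall: z t = (v₀ - g t) * exp (K t) is monotone on [0, t₀]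
    set z : ℝ → ℝ := fun t => (v₀ - g t) * Real.exp (K * t) with hz_def
    have hzmono : MonotoneOn z (Set.Icc 0 t₀) := by
      apply monotoneOn_of_deriv_nonneg (convex_Icc 0 t₀)
      · apply ContinuousOn.mul
        · exact (continuousOn_const.sub (hgcont.mono
            (fun x hx => Set.mem_Ici.mpr (by linarith [hx.1]))))
        · exact (Real.continuous_exp.comp (continuous_const.mul continuous_id)).continuousOn
      · rw [interior_Icc]
        intro x hx
        have h1 : HasDerivAt (fun t : ℝ => v₀ - g t) (0 - F x) x :=
          (hasDerivAt_const x v₀).sub (hode' x hx.1)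
        have h2 : HasDerivAt (fun t : ℝ => Real.exp (K * t)) (Real.exp (K * x) * K) x := by
          simpa using ((hasDerivAt_id x).const_mul K).exp
        exact ((h1.mul h2).differentiableAt).differentiableWithinAt
      · rw [interior_Icc]
        intro x hx
        have h1 : HasDerivAt (fun t : ℝ => v₀ - g t) (0 - F x) x :=
          (hasDerivAt_const x v₀).sub (hode' x hx.1)
        have h2 : HasDerivAt (fun t : ℝ => Real.exp (K * t)) (Real.exp (K * x) * K) x := by
          simpa using ((hasDerivAt_id x).const_mul K).exp
        have h3 := h1.mul h2
        rw [show deriv z x = _ from h3.deriv]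
        have hFx := hkey x hx.1 hx.2.le
        have hvx : g x ≤ v₀ :=
          hgmono (Set.mem_Ici.mpr (by linarith [hx.1])) (Set.mem_Ici.mpr (by linarith))
            hx.2.le
        have hexp := Real.exp_pos (K * x)
        nlinarith
    have hz0 : z 0 ≤ z t₀ := hzmono ⟨le_rfl, ht₀.le⟩ ⟨ht₀.le, le_rfl⟩ ht₀.le
    have hzt₀ : z t₀ = 0 := by rw [hz_def]; simp [hv₀_def]
    have hz00 : z 0 = v₀ - ε₀ := by rw [hz_def]; simp [hg0]
    have hv₀ε : v₀ = ε₀ := by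
      rw [hz00, hzt₀] at hz0
      linarith
    -- then g is constantly ε₀ up to t₀ and F t₀ > 0, contradiction
    have hu₀ε : u₀ = ε₀ := by
      rcases le_or_gt (t₀ - r) 0 with hc | hc
      · exact hginit _ ⟨by linarith, hc⟩
      · apply le_antisymm
        · rw [← hv₀ε]
          exact hgmono (Set.mem_Ici.mpr (by linarith)) (Set.mem_Ici.mpr (by linarith))
            (by linarith)
        · rw [← hg0]
          exact hgmono (Set.mem_Ici.mpr (by linarith)) (Set.mem_Ici.mpr (by linarith)) hc.le
    have : 0 < F t₀ := by
      rw [← hFeq t₀ ht₀.le, ← hu₀_def, ← hv₀_def, hu₀ε, hv₀ε]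
      exact hpos ε₀ hε0 hεκ
    linarith
  -- strict monotonicity
  have hstrict : StrictMonoOn g (Set.Ici 0) := by
    apply strictMonoOn_of_deriv_pos (convex_Ici 0)
    · exact hgcont.mono (fun x hx => Set.mem_Ici.mpr (by linarith [Set.mem_Ici.mp hx]))
    · rw [interior_Ici]
      intro x hx
      rw [(hode' x hx).deriv]
      exact hFpos x hx
  refine ⟨hstrict, ?_⟩
  by_cases hcase : ∃ t₁ ≥ (0:ℝ), κhat < g t₁
  · obtain ⟨t₁, ht₁, hgt₁⟩ := hcase
    refine ⟨t₁ + 1, by linarith, fun t ht => ?_⟩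
    calc κhat < g t₁ := hgt₁
      _ < g t := hstrict (Set.mem_Ici.mpr ht₁) (Set.mem_Ici.mpr (by linarith)) (by linarith)
  · exfalso
    push_neg at hcase
    have hgle : ∀ t : ℝ, 0 ≤ t → g t ≤ κhat := fun t ht => hcase t ht
    set Ls := sSup (g '' Set.Ici 0) with hLs_def
    have hne : (g '' Set.Ici 0).Nonempty := ⟨g 0, 0, Set.self_mem_Ici, rfl⟩
    have hbddim : BddAbove (g '' Set.Ici 0) := by
      refine ⟨κhat, ?_⟩
      rintro y ⟨t, ht, rfl⟩
      exact hgle t ht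
    have hLle : Ls ≤ κhat := csSup_le hne (by rintro y ⟨t, ht, rfl⟩; exact hgle t ht)
    have hgleL : ∀ t : ℝ, 0 ≤ t → g t ≤ Ls := fun t ht => le_csSup hbddim ⟨t, ht, rfl⟩
    have hg0 : g 0 = ε₀ := hginit 0 ⟨by linarith, le_rfl⟩
    have hLge : ε₀ ≤ Ls := hg0 ▸ hgleL 0 le_rfl
    have hLpos : 0 < Ls := lt_of_lt_of_le hε0 hLge
    set m := sInf (img Ls Ls) with hm_def
    have hmpos : 0 < m := hpos Ls hLpos hLle
    obtain ⟨Kb, hKb⟩ := deriv_bound_exists b hbC1 κhat hκ.le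
    have hd0bK : d0b ≤ Kb := hKb 0 ⟨le_rfl, hκ.le⟩
    have hKbpos : 0 < Kb := lt_of_le_of_lt hD0' (lt_of_lt_of_le hderiv hd0bK)
    have hlipb := onesided_lip b hbC1 κhat Kb hKb
    set δ := m / (2 * Kb) with hδ_def
    have hδpos : 0 < δ := div_pos hmpos (by linarith)
    obtain ⟨y, hy, hylt⟩ := exists_lt_of_lt_csSup hne (show Ls - δ < Ls by linarith)
    obtain ⟨T₁, hT₁m, rfl⟩ := hy
    have hT₁ : (0:ℝ) ≤ T₁ := Set.mem_Ici.mp hT₁m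
    -- uniform positive lower bound for F beyond T₁ + r
    have hclow : ∀ t : ℝ, T₁ + r ≤ t → m / 2 ≤ F t := by
      intro t ht
      have htpos : 0 < t := lt_of_lt_of_le (by linarith) ht
      have hut : 0 < g (t - r) := hgpos _ (Set.mem_Ici.mpr (by linarith))
      have hvt : 0 < g t := hgpos _ (Set.mem_Ici.mpr (by linarith))
      have hT₁pos : 0 < g T₁ := hgpos _ (Set.mem_Ici.mpr (by linarith))
      have huT : g T₁ ≤ g (t - r) :=
        hgmono (Set.mem_Ici.mpr (by linarith)) (Set.mem_Ici.mpr (by linarith)) (by linarith)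
      have hvL : g t ≤ Ls := hgleL t htpos.le
      have hstep1 : sInf (img (g T₁) Ls) ≤ sInf (img (g (t - r)) (g t)) :=
        hcomp _ _ _ _ hT₁pos hvt huT hvL
      have hstep2 : m - Kb * (Ls - g T₁) ≤ sInf (img (g T₁) Ls) := by
        obtain ⟨l, hl, heq', hminl'⟩ := hmin (g T₁) Ls hT₁pos hLpos
        rw [heq']
        have hLm : sInf (img Ls Ls) ≤ Hm Ls Ls l := by
          obtain ⟨l2, hl2, heq2, hminl2⟩ := hmin Ls Ls hLpos hLpos
          rw [heq2]; exact hminl2 l hl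
        have hdiff : Hm Ls Ls l - Hm (g T₁) Ls l ≤ Kb * (Ls - g T₁) := by
          rcases eq_or_lt_of_le hl.1 with h0 | h0
          · rw [hHm_def]
            simp only [← h0, zero_mul]
            have hsb0 : sb 0 = d0b := by simp [hsb_def]
            rw [hsb0]
            have hgTL : g T₁ ≤ Ls := hgleL T₁ hT₁
            nlinarith [hd0bK, sub_nonneg.mpr hgTL]
          · rw [hHval Ls Ls l hLpos hLpos h0, hHval (g T₁) Ls l hT₁pos hLpos h0]
            have hgTL : g T₁ ≤ Ls := hgleL T₁ hT₁
            have hble : b (l * Ls) - b (l * g T₁) ≤ Kb * (l * Ls - l * g T₁) := by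
              apply hlipb (l * g T₁) (l * Ls) (mul_nonneg h0.le hT₁pos.le)
                (mul_le_mul_of_nonneg_left hgTL h0.le)
              calc l * Ls ≤ 1 * Ls := mul_le_mul_of_nonneg_right hl.2 hLpos.le
                _ = Ls := one_mul Ls
                _ ≤ κhat := hLle
            rw [div_sub_div_same, div_le_iff₀ h0]
            calc b (l * Ls) - Dd (l * Ls) - (b (l * g T₁) - Dd (l * Ls))
                = b (l * Ls) - b (l * g T₁) := by ring
              _ ≤ Kb * (l * Ls - l * g T₁) := hble
              _ = Kb * (Ls - g T₁) * l := by ring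
        rw [← hm_def] at hLm
        linarith
      have hKδ : Kb * (Ls - g T₁) ≤ m / 2 := by
        have h1 : Ls - g T₁ ≤ δ := by linarith
        calc Kb * (Ls - g T₁) ≤ Kb * δ := by
              apply mul_le_mul_of_nonneg_left h1 hKbpos.le
          _ = m / 2 := by
              rw [hδ_def]; field_simp
      have heqF := hFeq t htpos.le
      rw [heqF] at hstep1
      linarith
    -- linear growth
    set c := m / 2 with hc_def
    have hcpos : 0 < c := by positivity
    have hφmono : MonotoneOn (fun t => g t - c * t) (Set.Ici (T₁ + r)) := by
      apply monotoneOn_of_deriv_nonneg (convex_Ici (T₁ + r))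
      · apply ContinuousOn.sub
        · exact hgcont.mono (fun x hx => Set.mem_Ici.mpr (by nlinarith [Set.mem_Ici.mp hx]))
        · exact (continuous_const.mul continuous_id).continuousOn
      · rw [interior_Ici]
        intro x hx
        have hxpos : 0 < x := lt_trans (by linarith) hx
        exact ((hode' x hxpos).sub ((hasDerivAt_id x).const_mul c)).differentiableAt
          |>.differentiableWithinAt
      · rw [interior_Ici]
        intro x hx
        have hxpos : 0 < x := lt_trans (by linarith) hx
        have hD : HasDerivAt (fun t => g t - c * t) (F x - c * 1) x :=
          (hode' x hxpos).sub ((hasDerivAt_id x).const_mul c)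
        rw [hD.deriv, mul_one]
        linarith [hclow x (le_of_lt (Set.mem_Ioi.mp hx))]
    -- take t large enough
    set tbig := T₁ + r + (κhat + 1) / c with htbig_def
    have htbig_ge : T₁ + r ≤ tbig := by
      rw [htbig_def]
      have : 0 ≤ (κhat + 1) / c := by positivity
      linarith
    have hgrow := hφmono (Set.mem_Ici.mpr le_rfl) (Set.mem_Ici.mpr htbig_ge) htbig_ge
    simp only at hgrow
    have hgT₁r : 0 < g (T₁ + r) := hgpos _ (Set.mem_Ici.mpr (by linarith))
    have : g tbig ≥ g (T₁ + r) + c * (tbig - (T₁ + r)) := by linarith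
    have hctbig : c * (tbig - (T₁ + r)) = κhat + 1 := by
      rw [htbig_def]
      field_simp
      ring
    have hbig : κhat < g tbig := by
      rw [hctbig] at this
      linarith
    exact absurd hbig (not_lt.mpr (hgle tbig (by nlinarith)))
end

section
/- Define u : ℝ × ℝ → ℝ by u(t, x) = max(0, 1 − exp(−(x + t)/2)). Then u is continuous, and for every (t, x) with x + t ≠ 0 the pointwise identity ∂u/∂t (t, x) = ∂²(u²)/∂x² (t, x) + u(t, x) − u(t, x)² holds (on {x + t < 0} all terms vanish since u ≡ 0 there, and on {x + t > 0} the identity holds with u(t,x) = 1 − e^{−(x+t)/2}). In other words, φ(ξ) := max(0, 1 − e^{−ξ/2}) is a sharp (semi-compactly supported) traveling wave profile of the degenerate Fisher-KPP equation u_t = (u²)_{xx} + u − u² with wave speed 1. -/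
open Real Filter Set Topology

noncomputable def uExp (t x : ℝ) : ℝ := max 0 (1 - Real.exp (-(x + t) / 2))

private lemma uExp_of_nonneg {t x : ℝ} (h : 0 ≤ x + t) :
    uExp t x = 1 - Real.exp (-(x + t) / 2) := by
  have : Real.exp (-(x + t) / 2) ≤ 1 := by
    rw [← Real.exp_zero]
    exact Real.exp_le_exp.2 (by linarith)
  simp [uExp, max_eq_right, this]
  linarith

private lemma uExp_of_nonpos {t x : ℝ} (h : x + t ≤ 0) : uExp t x = 0 := by
  have : (1:ℝ) ≤ Real.exp (-(x + t) / 2) := by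
    rw [← Real.exp_zero]
    exact Real.exp_le_exp.2 (by linarith)
  simp [uExp, max_eq_left]
  linarith

private lemma expDeriv (c x : ℝ) :
    HasDerivAt (fun y : ℝ => Real.exp (-(y + c) / 2))
      (Real.exp (-(x + c) / 2) * (-1/2)) x := by
  have h : HasDerivAt (fun y : ℝ => -(y + c) / 2) (-1/2) x := by
    simpa using (((hasDerivAt_id x).add_const c).neg.div_const 2)
  simpa using h.exp

private lemma sqDeriv (c : ℝ) :
    deriv (fun y : ℝ => (1 - Real.exp (-(y + c) / 2)) ^ 2) =
      fun y : ℝ => Real.exp (-(y + c) / 2) - Real.exp (-(y + c) / 2) ^ 2 := by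
  funext y
  have h : HasDerivAt (fun y : ℝ => (1 - Real.exp (-(y + c) / 2)) ^ 2)
      (2 * (1 - Real.exp (-(y + c) / 2)) ^ 1 * (0 - Real.exp (-(y + c) / 2) * (-1/2))) y :=
    ((hasDerivAt_const y (1:ℝ)).sub (expDeriv c y)).pow 2
  rw [h.deriv]; ring

/-- `uExp` is continuous and satisfies the degenerate Fisher-KPP
equation `u_t = (u²)_{xx} + u - u²` pointwise at every `(t, x)` with `x + t ≠ 0`. -/
theorem explicit_sharp_wave :
    Continuous (fun p : ℝ × ℝ => uExp p.1 p.2) ∧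
    ∀ t x : ℝ, x + t ≠ 0 →
      deriv (fun s : ℝ => uExp s x) t =
        deriv (deriv (fun y : ℝ => (uExp t y) ^ 2)) x + uExp t x - (uExp t x) ^ 2 := by
  constructor
  · have : Continuous (fun p : ℝ × ℝ => 1 - Real.exp (-(p.2 + p.1) / 2)) := by
      continuity
    exact continuous_const.max this
  · intro t x hne
    rcases lt_or_gt_of_ne hne with hneg | hpos
    · -- x + t < 0 : everything vanishes
      have h1 : (fun s : ℝ => uExp s x) =ᶠ[𝓝 t] fun _ => (0:ℝ) := by
        have ho : IsOpen {s : ℝ | x + s < 0} :=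
          isOpen_lt (continuous_const.add continuous_id) continuous_const
        filter_upwards [ho.mem_nhds hneg] with s hs
        exact uExp_of_nonpos hs.le
      have h2 : (fun y : ℝ => (uExp t y) ^ 2) =ᶠ[𝓝 x] fun _ => (0:ℝ) := by
        have ho : IsOpen {y : ℝ | y + t < 0} :=
          isOpen_lt (continuous_id.add continuous_const) continuous_const
        filter_upwards [ho.mem_nhds hneg] with y hy
        simp [uExp_of_nonpos hy.le]
      have hL : deriv (fun s : ℝ => uExp s x) t = 0 := by
        rw [h1.deriv_eq]; simp
      have hd : deriv (fun y : ℝ => (uExp t y) ^ 2) =ᶠ[𝓝 x] deriv (fun _ => (0:ℝ)) :=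
        h2.deriv
      have hR : deriv (deriv (fun y : ℝ => (uExp t y) ^ 2)) x = 0 := by
        rw [hd.deriv_eq]; simp
      rw [hL, hR, uExp_of_nonpos hneg.le]; ring
    · -- x + t > 0
      have hE : Real.exp (-(x + t) / 2) ≤ 1 := by
        rw [← Real.exp_zero]; exact Real.exp_le_exp.2 (by linarith)
      have hU : uExp t x = 1 - Real.exp (-(x + t) / 2) := uExp_of_nonneg hpos.le
      -- time derivative
      have h1 : (fun s : ℝ => uExp s x) =ᶠ[𝓝 t] fun s => 1 - Real.exp (-(x + s) / 2) := by
        have ho : IsOpen {s : ℝ | 0 < x + s} :=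
          isOpen_lt continuous_const (continuous_const.add continuous_id)
        filter_upwards [ho.mem_nhds hpos] with s hs
        exact uExp_of_nonneg hs.le
      have hL : deriv (fun s : ℝ => uExp s x) t = Real.exp (-(x + t) / 2) * (1/2) := by
        rw [h1.deriv_eq]
        have : HasDerivAt (fun s : ℝ => 1 - Real.exp (-(x + s) / 2))
            (0 - Real.exp (-(x + t) / 2) * (-1/2)) t := by
          have h : HasDerivAt (fun s : ℝ => Real.exp (-(x + s) / 2))
              (Real.exp (-(t + x) / 2) * (-1/2)) t := by
            have := expDeriv x t
            simpa [add_comm] using this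
          have h' : HasDerivAt (fun s : ℝ => Real.exp (-(x + s) / 2))
              (Real.exp (-(x + t) / 2) * (-1/2)) t := by
            rw [add_comm x t]; exact h
          exact (hasDerivAt_const t (1:ℝ)).sub h'
        rw [this.deriv]; ring
      -- space second derivative
      have h2 : (fun y : ℝ => (uExp t y) ^ 2) =ᶠ[𝓝 x]
          fun y => (1 - Real.exp (-(y + t) / 2)) ^ 2 := by
        have ho : IsOpen {y : ℝ | 0 < y + t} :=
          isOpen_lt continuous_const (continuous_id.add continuous_const)
        filter_upwards [ho.mem_nhds hpos] with y hy
        rw [uExp_of_nonneg hy.le]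
      have hd : deriv (fun y : ℝ => (uExp t y) ^ 2) =ᶠ[𝓝 x]
          (fun y : ℝ => Real.exp (-(y + t) / 2) - Real.exp (-(y + t) / 2) ^ 2) := by
        have := h2.deriv
        rwa [sqDeriv t] at this
      have hR : deriv (deriv (fun y : ℝ => (uExp t y) ^ 2)) x =
          Real.exp (-(x + t) / 2) * (-1/2) -
            2 * Real.exp (-(x + t) / 2) ^ 1 * (Real.exp (-(x + t) / 2) * (-1/2)) := by
        rw [hd.deriv_eq]
        exact ((expDeriv t x).sub ((expDeriv t x).pow 2)).deriv
      rw [hL, hR, hU]; ring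
end
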